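/- arXiv:2601.18657 — 10 statements merged into one kernel-verified Lean document; each statement's English description precedes it below -/
import Mathlib

section
/- For every positive integer n, the number of partitions of n into odd parts equals the number of partitions of n+1 whose largest part is even and in which all parts not exceeding half of the largest part are distinct. -/
/-- `C n` is the number of partitions of `n` (multisets of positive integers summing
to `n`) whose largest part is even, say `2ℓ`, and in which all parts not exceeding
`ℓ` are distinct. -/
noncomputable def Ccount (n : ℕ) : ℕ :=
  Set.ncard {M : Multiset ℕ | M.sum = n ∧ (∀ x ∈ M, 0 < x) ∧
    ∃ ℓ : ℕ, 0 < ℓ ∧ (2 * ℓ) ∈ M ∧ (∀ x ∈ M, x ≤ 2 * ℓ) ∧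
      (M.filter (fun x => x ≤ ℓ)).Nodup}

open Multiset Finset

namespace OddC

def v2 (p : ℕ) : ℕ := p.factorization 2
def oc (p : ℕ) : ℕ := p / 2 ^ v2 p

lemma oc_odd {p : ℕ} (hp : p ≠ 0) : Odd (oc p) := by
  have := Nat.not_dvd_ordCompl (by norm_num : Nat.Prime 2) hp
  simpa [oc, v2, Nat.odd_iff, Nat.two_dvd_ne_zero] using this

lemma op_mul_oc {p : ℕ} : 2 ^ v2 p * oc p = p :=
  Nat.ordProj_mul_ordCompl_eq_self p 2

lemma oc_pos {p : ℕ} (hp : p ≠ 0) : 0 < oc p :=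
  Nat.ordCompl_pos 2 hp

lemma v2_eq {k o : ℕ} (ho : Odd o) : v2 (o * 2 ^ k) = k := by
  have h2 : ¬ (2 ∣ o) := by rwa [Nat.odd_iff, ← Nat.two_dvd_ne_zero] at ho
  have ho0 : o ≠ 0 := by rintro rfl; simp at ho
  rw [v2, Nat.factorization_mul ho0 (by positivity), Nat.factorization_pow]
  simp [Nat.factorization_eq_zero_of_not_dvd h2,
    Nat.Prime.factorization_self (by norm_num : Nat.Prime 2)]

lemma oc_eq {k o : ℕ} (ho : Odd o) : oc (o * 2 ^ k) = o := by
  have ho0 : o ≠ 0 := by rintro rfl; simp at ho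
  have h := op_mul_oc (p := o * 2 ^ k)
  rw [v2_eq ho] at h
  have : 2 ^ k * oc (o * 2 ^ k) = 2 ^ k * o := by rw [h]; ring
  exact Nat.eq_of_mul_eq_mul_left (by positivity) this

lemma eq_oc_v2 {p : ℕ} : p = oc p * 2 ^ v2 p := by
  rw [mul_comm]; exact op_mul_oc.symm

/-- binary expansion identity -/
lemma sum_bits (m K : ℕ) :
    (∑ k ∈ Finset.range K, 2 ^ k * (m / 2 ^ k % 2)) + 2 ^ K * (m / 2 ^ K) = m := by
  induction K with
  | zero => simp
  | succ K ih =>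
    rw [Finset.sum_range_succ]
    have : 2 ^ (K+1) * (m / 2 ^ (K+1)) = 2 ^ K * (2 * (m / 2 ^ K / 2)) := by
      rw [pow_succ, Nat.div_div_eq_div_mul]; ring
    rw [add_assoc, this, ← Nat.mul_add, Nat.mod_add_div (m / 2 ^ K) 2]
    exact ih

lemma bits_unique (K : ℕ) : ∀ d : (ℕ → ℕ), (∀ k < K, d k ≤ 1) →
    (∀ k < K, (∑ j ∈ Finset.range (K+1), 2 ^ j * d j) / 2 ^ k % 2 = d k) ∧
    (∑ j ∈ Finset.range (K+1), 2 ^ j * d j) / 2 ^ K = d K := by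
  induction K with
  | zero => intro d _; simp
  | succ K ih =>
    intro d hd
    have hre : (∑ j ∈ Finset.range (K+2), 2 ^ j * d j)
        = d 0 + 2 * ∑ j ∈ Finset.range (K+1), 2 ^ j * d (j+1) := by
      rw [Finset.sum_range_succ' (fun j => 2 ^ j * d j) (K+1), Finset.mul_sum, add_comm]
      simp only [pow_zero, one_mul]
      congr 1
      apply Finset.sum_congr rfl
      intros; ring
    have hd0 : d 0 ≤ 1 := hd 0 (by omega)
    have ihs := ih (fun j => d (j+1)) (fun k hk => hd (k+1) (by omega))
    have hdiv : ∀ k : ℕ, (∑ j ∈ Finset.range (K+2), 2 ^ j * d j) / 2 ^ (k+1)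
        = (∑ j ∈ Finset.range (K+1), 2 ^ j * d (j+1)) / 2 ^ k := by
      intro k
      rw [hre, pow_succ', ← Nat.div_div_eq_div_mul]
      congr 1
      omega
    constructor
    · intro k hk
      match k with
      | 0 => rw [hre]; simp [Nat.add_mul_mod_self_left]; omega
      | (k+1) =>
        rw [hdiv k]
        simpa using ihs.1 k (by omega)
    · rw [hdiv K]
      simpa using ihs.2


/-- Glaisher-type splitting map: each part `p = o·2^k` becomes `2^k` copies of `o`. -/
noncomputable def G (ν : Multiset ℕ) : Multiset ℕ := ν.bind fun p => replicate (2 ^ v2 p) (oc p)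

lemma G_sum {ν : Multiset ℕ} : (G ν).sum = ν.sum := by
  rw [G, Multiset.sum_bind]
  have : ν.map (fun a => (replicate (2 ^ v2 a) (oc a)).sum) = ν.map id := by
    apply Multiset.map_congr rfl
    intro p _
    simp only [Multiset.sum_replicate, smul_eq_mul, id_eq]
    exact op_mul_oc
  rw [this, Multiset.map_id]

lemma mem_G {ν : Multiset ℕ} {a : ℕ} (ha : a ∈ G ν) : ∃ p ∈ ν, a = oc p := by
  rw [G, Multiset.mem_bind] at ha
  obtain ⟨p, hp, hmem⟩ := ha
  exact ⟨p, hp, Multiset.eq_of_mem_replicate hmem⟩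

lemma G_count {ν : Multiset ℕ} {o : ℕ} (ho : Odd o) {N : ℕ}
    (hν : ∀ p ∈ ν, 0 < p ∧ p < 2 ^ N) :
    (G ν).count o = ∑ k ∈ Finset.range N, 2 ^ k * ν.count (o * 2 ^ k) := by
  induction ν using Multiset.induction with
  | empty => simp [G]
  | cons p ν ih =>
    have hp := hν p (Multiset.mem_cons_self _ _)
    have hν' : ∀ q ∈ ν, 0 < q ∧ q < 2 ^ N := fun q hq => hν q (Multiset.mem_cons_of_mem hq)
    rw [G, Multiset.cons_bind, Multiset.count_add, ← G, ih hν']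
    rw [Multiset.count_replicate]
    have hcc : ∀ k, (p ::ₘ ν).count (o * 2 ^ k) =
        ν.count (o * 2 ^ k) + if o * 2 ^ k = p then 1 else 0 := by
      intro k
      rw [Multiset.count_cons]
    simp only [hcc, Nat.mul_add, Finset.sum_add_distrib]
    have hx : (if oc p = o then 2 ^ v2 p else 0)
        = ∑ k ∈ Finset.range N, 2 ^ k * (if o * 2 ^ k = p then 1 else 0) := by
      by_cases h : oc p = o
      · rw [if_pos h]
        symm
        have hpe : p = o * 2 ^ v2 p := by rw [← h]; exact eq_oc_v2
        have hv2N : v2 p < N := by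
          have h1 : 2 ^ v2 p ≤ p := by
            calc 2 ^ v2 p ≤ 2 ^ v2 p * oc p := Nat.le_mul_of_pos_right _ (oc_pos (by omega))
            _ = p := op_mul_oc
          have := hp.2
          have := Nat.pow_lt_pow_iff_right (a := 2) (by norm_num) |>.mp (by omega : 2 ^ v2 p < 2 ^ N)
          omega
        have key : ∀ k, (if o * 2 ^ k = p then 2 ^ k * 1 else 2 ^ k * 0) =
            if k = v2 p then 2 ^ v2 p else 0 := by
          intro k
          by_cases hk : k = v2 p
          · subst hk; rw [if_pos (by omega), if_pos rfl, mul_one]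
          · rw [if_neg, if_neg hk, mul_zero]
            intro hc
            apply hk
            have : o * 2 ^ k = o * 2 ^ v2 p := by omega
            have ho0 : 0 < o := ho.pos
            have := Nat.eq_of_mul_eq_mul_left ho0 this
            exact Nat.pow_right_injective (le_refl 2) this
        calc ∑ k ∈ Finset.range N, 2 ^ k * (if o * 2 ^ k = p then 1 else 0)
            = ∑ k ∈ Finset.range N, if k = v2 p then 2 ^ v2 p else 0 := by
              apply Finset.sum_congr rfl; intro k _
              rw [mul_ite]; exact key k
          _ = 2 ^ v2 p := by rw [Finset.sum_ite_eq' (Finset.range N) (v2 p)]; simp [hv2N]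
      · rw [if_neg h]
        symm
        apply Finset.sum_eq_zero
        intro k _
        have : ¬ (o * 2 ^ k = p) := by
          intro hc
          apply h
          rw [← hc, oc_eq ho]
        simp [this]
    rw [hx]
    exact add_comm _ _


/-- count of part `p` in the merged partition -/
noncomputable def c (ℓ : ℕ) (μ : Multiset ℕ) (p : ℕ) : ℕ :=
  if p ≤ ℓ then μ.count (oc p) / 2 ^ v2 p % 2
  else if p / 2 ≤ ℓ then μ.count (oc p) / 2 ^ v2 p else 0

/-- Glaisher-type merging map (inverse of `G` on suitable sets). -/
noncomputable def F (ℓ : ℕ) (μ : Multiset ℕ) : Multiset ℕ :=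
  ∑ p ∈ Finset.Icc 1 (2*ℓ), replicate (c ℓ μ p) p

lemma F_count (ℓ : ℕ) (μ : Multiset ℕ) (p : ℕ) :
    (F ℓ μ).count p = if p ∈ Finset.Icc 1 (2*ℓ) then c ℓ μ p else 0 := by
  rw [F, Multiset.count_sum']
  rw [Finset.sum_congr rfl (fun q _ => Multiset.count_replicate p q (c ℓ μ q))]
  exact Finset.sum_ite_eq' (Finset.Icc 1 (2*ℓ)) p (c ℓ μ)

lemma mem_F {ℓ : ℕ} {μ : Multiset ℕ} {p : ℕ} (hp : p ∈ F ℓ μ) : 1 ≤ p ∧ p ≤ 2*ℓ := by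
  have h := Multiset.count_pos.mpr hp
  rw [F_count] at h
  by_contra hc
  rw [if_neg (by simp only [Finset.mem_Icc]; omega)] at h
  omega

/-- existence of the threshold exponent -/
lemma exists_K {o ℓ : ℕ} (ho : 0 < o) : ∃ k, ℓ < o * 2 ^ k := by
  refine ⟨ℓ, ?_⟩
  calc ℓ < 2 ^ ℓ := Nat.lt_two_pow_self
  _ ≤ o * 2 ^ ℓ := Nat.le_mul_of_pos_left _ ho

lemma get_K {o ℓ : ℕ} (ho : 0 < o) : ∃ K, ℓ < o * 2 ^ K ∧ ∀ j < K, o * 2 ^ j ≤ ℓ := by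
  refine ⟨Nat.find (exists_K (ℓ := ℓ) ho), Nat.find_spec (exists_K (ℓ := ℓ) ho), ?_⟩
  intro j hj
  have := Nat.find_min (exists_K (ℓ := ℓ) ho) hj
  omega

/-- `G (F ℓ μ) = μ` when `μ` consists of odd parts `≤ 2ℓ-1`. -/
lemma G_F {ℓ : ℕ} (hℓ : 0 < ℓ) {μ : Multiset ℕ}
    (hμ : ∀ x ∈ μ, Odd x ∧ x ≤ 2*ℓ - 1) : G (F ℓ μ) = μ := by
  have hFparts : ∀ p ∈ F ℓ μ, 0 < p ∧ p < 2 ^ (2*ℓ) := by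
    intro p hp
    have h := mem_F hp
    have : 2*ℓ < 2 ^ (2*ℓ) := Nat.lt_two_pow_self
    omega
  ext o
  by_cases ho : Odd o
  swap
  · have h1 : (G (F ℓ μ)).count o = 0 := by
      rw [Multiset.count_eq_zero]
      intro hmem
      obtain ⟨p, hpF, rfl⟩ := mem_G hmem
      exact ho (oc_odd (by have := mem_F hpF; omega))
    have h2 : μ.count o = 0 := by
      rw [Multiset.count_eq_zero]
      intro hmem
      exact ho (hμ o hmem).1
    rw [h1, h2]
  rw [G_count ho hFparts]
  have hcount : ∀ k, (F ℓ μ).count (o * 2 ^ k)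
      = if o * 2 ^ k ∈ Finset.Icc 1 (2*ℓ) then c ℓ μ (o * 2 ^ k) else 0 := fun k => F_count ..
  by_cases hbig : 2*ℓ - 1 < o
  · have h2 : μ.count o = 0 := by
      rw [Multiset.count_eq_zero]
      intro hmem
      have := (hμ o hmem).2; omega
    have hc0 : ∀ k, c ℓ μ (o * 2 ^ k) = 0 := by
      intro k
      simp only [c, oc_eq ho, v2_eq ho, h2, Nat.zero_div, Nat.zero_mod, ite_self]
    rw [h2]
    apply Finset.sum_eq_zero
    intro k _
    rw [hcount k]
    split_ifs with h
    · rw [hc0, mul_zero]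
    · rw [mul_zero]
  · push_neg at hbig
    have ho0 : 0 < o := ho.pos
    obtain ⟨K, hK, hKmin⟩ := get_K (ℓ := ℓ) ho0
    have hK2 : o * 2 ^ K ≤ 2*ℓ := by
      match K with
      | 0 => simpa using (by omega : o ≤ 2*ℓ)
      | (j+1) =>
        have h1 := hKmin j (by omega)
        have h2 : o * 2 ^ (j+1) = 2 * (o * 2 ^ j) := by ring
        omega
    have hKN : K < 2*ℓ := by
      have h2K : 2 ^ K ≤ 2*ℓ := le_trans (Nat.le_mul_of_pos_left _ ho0) hK2
      by_contra hcon
      push_neg at hcon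
      have := Nat.pow_le_pow_right (by norm_num : 1 ≤ 2) hcon
      have := Nat.lt_two_pow_self (n := 2*ℓ)
      omega
    set m := μ.count o with hm
    have hterm : ∀ k ∈ Finset.range (2*ℓ), 2 ^ k * ((F ℓ μ).count (o * 2 ^ k))
        = if k < K then 2 ^ k * (m / 2 ^ k % 2)
          else if k = K then 2 ^ K * (m / 2 ^ K) else 0 := by
      intro k _
      rw [hcount k]
      have hpos : 1 ≤ o * 2 ^ k := Nat.one_le_iff_ne_zero.mpr (by positivity)
      rcases lt_trichotomy k K with h | h | h
      · have hle : o * 2 ^ k ≤ ℓ := hKmin k h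
        rw [if_pos (by simp only [Finset.mem_Icc]; omega),
          if_pos h]
        simp only [c, oc_eq ho, v2_eq ho, if_pos hle, ← hm]
      · subst h
        have hgt : ℓ < o * 2 ^ k := hK
        have hhalf : o * 2 ^ k / 2 ≤ ℓ := by
          match k with
          | 0 =>
            simp only [pow_zero, mul_one]
            omega
          | (j+1) =>
            have h1 : o * 2 ^ (j+1) = 2 * (o * 2 ^ j) := by ring
            have h2 := hKmin j (by omega)
            omega
        rw [if_pos (by simp only [Finset.mem_Icc]; omega),
          if_neg (lt_irrefl k), if_pos rfl]
        simp only [c, oc_eq ho, v2_eq ho, if_neg (by omega : ¬ o * 2 ^ k ≤ ℓ), if_pos hhalf, ← hm]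
      · have hout : 2*ℓ < o * 2 ^ k := by
          have h1 : o * 2 ^ (K+1) ≤ o * 2 ^ k :=
            Nat.mul_le_mul_left _ (Nat.pow_le_pow_right (by norm_num) (by omega))
          have h2 : o * 2 ^ (K+1) = 2 * (o * 2 ^ K) := by ring
          omega
        rw [if_neg (by simp only [Finset.mem_Icc]; omega), mul_zero,
          if_neg (by omega), if_neg (by omega)]
    rw [Finset.sum_congr rfl hterm]
    have hsub : Finset.range (K+1) ⊆ Finset.range (2*ℓ) := by
      apply Finset.range_subset_range.mpr; omega
    rw [← Finset.sum_subset hsub (by intro x _ hx; simp only [Finset.mem_range] at hx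
                                     rw [if_neg (by omega), if_neg (by omega)])]
    rw [Finset.sum_range_succ, if_neg (lt_irrefl K), if_pos rfl]
    rw [Finset.sum_congr rfl (fun k hk => by
      rw [if_pos (Finset.mem_range.mp hk)])]
    exact sum_bits m K

/-- `F ℓ (G ν) = ν` when `ν` has parts in `[1, 2ℓ]` with parts `≤ ℓ` distinct. -/
lemma F_G {ℓ : ℕ} (hℓ : 0 < ℓ) {ν : Multiset ℕ}
    (hν : ∀ x ∈ ν, 0 < x ∧ x ≤ 2*ℓ) (hnd : (ν.filter (fun x => x ≤ ℓ)).Nodup) :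
    F ℓ (G ν) = ν := by
  have hνN : ∀ x ∈ ν, 0 < x ∧ x < 2 ^ (2*ℓ) := by
    intro x hx
    have h := hν x hx
    have : 2*ℓ < 2 ^ (2*ℓ) := Nat.lt_two_pow_self
    omega
  have hcle : ∀ q, q ≤ ℓ → ν.count q ≤ 1 := by
    intro q hq
    have h := Multiset.nodup_iff_count_le_one.mp hnd q
    rwa [Multiset.count_filter, if_pos hq] at h
  ext p
  rw [F_count]
  by_cases hmem : p ∈ Finset.Icc 1 (2*ℓ)
  swap
  · rw [if_neg hmem, eq_comm, Multiset.count_eq_zero]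
    intro hp
    exact hmem (by simp only [Finset.mem_Icc]; have := hν p hp; omega)
  rw [if_pos hmem]
  simp only [Finset.mem_Icc] at hmem
  have hp0 : p ≠ 0 := by omega
  set o := oc p with hoc
  set k₀ := v2 p with hk₀
  have ho : Odd o := oc_odd hp0
  have ho0 : 0 < o := oc_pos hp0
  have hpe : p = o * 2 ^ k₀ := eq_oc_v2
  have hole : o ≤ p := Nat.le_of_dvd (by omega) ⟨2 ^ k₀, hpe⟩
  obtain ⟨K, hK, hKmin⟩ := get_K (ℓ := ℓ) ho0
  have hK2 : o * 2 ^ K ≤ 2*ℓ := by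
    match K with
    | 0 => simpa using (by omega : o ≤ 2*ℓ)
    | (j+1) =>
      have h1 := hKmin j (by omega)
      have h2 : o * 2 ^ (j+1) = 2 * (o * 2 ^ j) := by ring
      omega
  have hKN : K < 2*ℓ := by
    have h2K : 2 ^ K ≤ 2*ℓ := le_trans (Nat.le_mul_of_pos_left _ ho0) hK2
    by_contra hcon
    push_neg at hcon
    have := Nat.pow_le_pow_right (by norm_num : 1 ≤ 2) hcon
    have := Nat.lt_two_pow_self (n := 2*ℓ)
    omega
  set d : ℕ → ℕ := fun k => ν.count (o * 2 ^ k) with hd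
  have hd1 : ∀ k < K, d k ≤ 1 := fun k hk => hcle _ (hKmin k hk)
  have hd0 : ∀ k, K < k → d k = 0 := by
    intro k hk
    rw [hd]
    simp only
    rw [Multiset.count_eq_zero]
    intro hmm
    have h1 : o * 2 ^ (K+1) ≤ o * 2 ^ k :=
      Nat.mul_le_mul_left _ (Nat.pow_le_pow_right (by norm_num) (by omega))
    have h2 : o * 2 ^ (K+1) = 2 * (o * 2 ^ K) := by ring
    have := (hν _ hmm).2
    omega
  have hmsum : (G ν).count o = ∑ j ∈ Finset.range (K+1), 2 ^ j * d j := by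
    rw [G_count ho hνN]
    symm
    apply Finset.sum_subset (Finset.range_subset_range.mpr (by omega : K + 1 ≤ 2*ℓ))
    intro x _ hx
    simp only [Finset.mem_range] at hx
    rw [hd0 x (by omega), mul_zero]
  obtain ⟨hbit, htop⟩ := bits_unique K d hd1
  rw [← hmsum] at hbit htop
  -- mono facts
  have hmono : ∀ j k : ℕ, j ≤ k → o * 2 ^ j ≤ o * 2 ^ k := fun j k hjk =>
    Nat.mul_le_mul_left _ (Nat.pow_le_pow_right (by norm_num) hjk)
  by_cases h1 : p ≤ ℓ
  · have hk₀K : k₀ < K := by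
      by_contra hcon
      push_neg at hcon
      have := hmono K k₀ hcon
      omega
    simp only [c, ← hoc, ← hk₀, if_pos h1]
    rw [hbit k₀ hk₀K, hd]
    simp only
    rw [← hpe]
  · by_cases h2 : p / 2 ≤ ℓ
    · have hk₀K : k₀ = K := by
        have hle : K ≤ k₀ := by
          by_contra hcon
          push_neg at hcon
          have := hKmin k₀ hcon
          omega
        by_contra hcon
        have hge : K + 1 ≤ k₀ := by omega
        have hh : o * 2 ^ (K+1) ≤ o * 2 ^ k₀ := hmono _ _ hge
        have h3 : o * 2 ^ (K+1) = 2 * (o * 2 ^ K) := by ring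
        -- p / 2 ≥ o * 2^K > ℓ
        have h4 : o * 2 ^ k₀ / 2 ≥ o * 2 ^ K := by
          match k₀, hge with
          | (j+1), _ =>
            have h5 : o * 2 ^ (j+1) = 2 * (o * 2 ^ j) := by ring
            have h6 := hmono K j (by omega)
            omega
        omega
      simp only [c, ← hoc, ← hk₀, if_neg h1, if_pos h2]
      rw [hk₀K, htop, hd]
      simp only
      rw [← hk₀K, ← hpe]
    · exfalso
      match hke : k₀ with
      | 0 =>
        have : p = o := by rw [hpe]; simp
        have hpodd : Odd p := by rw [this]; exact ho
        rw [Nat.odd_iff] at hpodd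
        omega
      | (j+1) =>
        have h5 : p / 2 = o * 2 ^ j := by
          rw [hpe]
          have : o * 2 ^ (j+1) = o * 2 ^ j * 2 := by ring
          rw [this]
          exact Nat.mul_div_cancel _ (by norm_num)
        push_neg at h2
        have hjK : K ≤ j := by
          by_contra hcon
          push_neg at hcon
          have := hKmin j hcon
          omega
        have h6 : o * 2 ^ (K+1) ≤ o * 2 ^ (j+1) := hmono _ _ (by omega)
        have h7 : o * 2 ^ (K+1) = 2 * (o * 2 ^ K) := by ring
        omega


lemma oc_le {p : ℕ} (hp : p ≠ 0) : oc p ≤ p :=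
  Nat.div_le_self _ _

lemma F_filter_nodup (ℓ : ℕ) (μ : Multiset ℕ) : ((F ℓ μ).filter (fun x => x ≤ ℓ)).Nodup := by
  rw [Multiset.nodup_iff_count_le_one]
  intro q
  rw [Multiset.count_filter]
  split_ifs with hq
  · rw [F_count]
    split_ifs with hmem
    · rw [c, if_pos hq]
      omega
    · omega
  · omega

lemma sup_mem_of_ne_zero {s : Multiset ℕ} (hs : s ≠ 0) : s.sup ∈ s := by
  induction s using Multiset.induction with
  | empty => simp at hs
  | cons a s ih =>
    rw [Multiset.sup_cons]
    rcases eq_or_ne s 0 with rfl | h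
    · simp
    · rcases le_total a s.sup with hle | hle
      · rw [sup_eq_right.mpr hle]
        exact Multiset.mem_cons_of_mem (ih h)
      · rw [sup_eq_left.mpr hle]
        exact Multiset.mem_cons_self _ _

def S (n : ℕ) : Set (Multiset ℕ) :=
  {M : Multiset ℕ | M.sum = n ∧ (∀ x ∈ M, 0 < x) ∧
    ∃ ℓ : ℕ, 0 < ℓ ∧ (2 * ℓ) ∈ M ∧ (∀ x ∈ M, x ≤ 2 * ℓ) ∧
      (M.filter (fun x => x ≤ ℓ)).Nodup}

def T (n : ℕ) : Set (Multiset ℕ) := {M : Multiset ℕ | M.sum = n ∧ ∀ x ∈ M, Odd x}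

noncomputable def Phi (M : Multiset ℕ) : Multiset ℕ := (M.sup - 1) ::ₘ G (M.erase M.sup)
noncomputable def Psi (L : Multiset ℕ) : Multiset ℕ :=
  (L.sup + 1) ::ₘ F ((L.sup + 1)/2) (L.erase L.sup)

lemma Phi_spec {n : ℕ} {M : Multiset ℕ} (hM : M ∈ S (n+1)) :
    Phi M ∈ T n ∧ Psi (Phi M) = M := by
  obtain ⟨hsum, hpos, ℓ, hℓ, hmem, hle, hnd⟩ := hM
  have hsup : M.sup = 2*ℓ := le_antisymm (Multiset.sup_le.mpr hle) (Multiset.le_sup hmem)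
  have hrec : M = (2*ℓ) ::ₘ M.erase (2*ℓ) := (Multiset.cons_erase hmem).symm
  have hM' : ∀ x ∈ M.erase (2*ℓ), 0 < x ∧ x ≤ 2*ℓ := fun x hx =>
    ⟨hpos x (Multiset.mem_of_mem_erase hx), hle x (Multiset.mem_of_mem_erase hx)⟩
  have hPhi : Phi M = (2*ℓ - 1) ::ₘ G (M.erase (2*ℓ)) := by rw [Phi, hsup]
  have hGodd : ∀ a ∈ G (M.erase (2*ℓ)), Odd a ∧ a ≤ 2*ℓ - 1 := by
    intro a ha
    obtain ⟨p, hp, rfl⟩ := mem_G ha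
    have h1 := hM' p hp
    have h2 : Odd (oc p) := oc_odd (by omega)
    refine ⟨h2, ?_⟩
    have h3 : oc p ≤ p := oc_le (by omega)
    have h4 : oc p ≠ 2*ℓ := by
      intro hc
      rw [Nat.odd_iff, hc] at h2
      omega
    omega
  have hodd : ∀ x ∈ Phi M, Odd x := by
    rw [hPhi]
    intro x hx
    rcases Multiset.mem_cons.mp hx with rfl | hx
    · exact ⟨ℓ - 1, by omega⟩
    · exact (hGodd x hx).1
  have hsum' : (Phi M).sum = n := by
    rw [hPhi, Multiset.sum_cons, G_sum]
    have : M.sum = 2*ℓ + (M.erase (2*ℓ)).sum := by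
      conv_lhs => rw [hrec]
      rw [Multiset.sum_cons]
    omega
  refine ⟨⟨hsum', hodd⟩, ?_⟩
  have hsupPhi : (Phi M).sup = 2*ℓ - 1 := by
    apply le_antisymm
    · apply Multiset.sup_le.mpr
      intro b hb
      rw [hPhi] at hb
      rcases Multiset.mem_cons.mp hb with rfl | hb
      · exact le_refl _
      · exact (hGodd b hb).2
    · exact Multiset.le_sup (by rw [hPhi]; exact Multiset.mem_cons_self _ _)
  rw [Psi, hsupPhi]
  have h1 : 2*ℓ - 1 + 1 = 2*ℓ := by omega
  have h2 : (2*ℓ)/2 = ℓ := by omega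
  rw [h1, h2, hPhi]
  rw [Multiset.erase_cons_head]
  rw [F_G hℓ hM' (Multiset.nodup_of_le (Multiset.filter_le_filter _ (Multiset.erase_le _ _)) hnd)]
  exact hrec.symm

lemma Psi_spec {n : ℕ} (hn : 0 < n) {L : Multiset ℕ} (hL : L ∈ T n) :
    Psi L ∈ S (n+1) ∧ Phi (Psi L) = L := by
  obtain ⟨hsum, hodd⟩ := hL
  have hL0 : L ≠ 0 := by rintro rfl; simp at hsum; omega
  have hsupmem : L.sup ∈ L := sup_mem_of_ne_zero hL0
  obtain ⟨t, ht⟩ := hodd _ hsupmem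
  set ℓ := t + 1 with hℓdef
  have hℓ : 0 < ℓ := by omega
  have hrec : L = L.sup ::ₘ L.erase L.sup := (Multiset.cons_erase hsupmem).symm
  have hL' : ∀ x ∈ L.erase L.sup, Odd x ∧ x ≤ 2*ℓ - 1 := by
    intro x hx
    refine ⟨hodd x (Multiset.mem_of_mem_erase hx), ?_⟩
    have := Multiset.le_sup (Multiset.mem_of_mem_erase hx)
    omega
  have hPsi : Psi L = (2*ℓ) ::ₘ F ℓ (L.erase L.sup) := by
    rw [Psi]
    rw [show L.sup + 1 = 2*ℓ by omega, show (2*ℓ)/2 = ℓ by omega]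
  have hFsum : (F ℓ (L.erase L.sup)).sum = (L.erase L.sup).sum := by
    rw [← G_sum (ν := F ℓ (L.erase L.sup)), G_F hℓ hL']
  have hsumL' : L.sum = L.sup + (L.erase L.sup).sum := by
    conv_lhs => rw [hrec]
    rw [Multiset.sum_cons]
  have hmemS : Psi L ∈ S (n+1) := by
    refine ⟨?_, ?_, ℓ, hℓ, ?_, ?_, ?_⟩
    · rw [hPsi, Multiset.sum_cons, hFsum]
      omega
    · rw [hPsi]
      intro x hx
      rcases Multiset.mem_cons.mp hx with rfl | hx
      · omega
      · have := mem_F hx; omega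
    · rw [hPsi]; exact Multiset.mem_cons_self _ _
    · rw [hPsi]
      intro x hx
      rcases Multiset.mem_cons.mp hx with rfl | hx
      · exact le_refl _
      · exact (mem_F hx).2
    · rw [hPsi, Multiset.filter_cons_of_neg (p := fun x => x ≤ ℓ) _ (by omega : ¬ (2*ℓ ≤ ℓ))]
      exact F_filter_nodup ℓ _
  refine ⟨hmemS, ?_⟩
  have hsupPsi : (Psi L).sup = 2*ℓ := by
    apply le_antisymm
    · apply Multiset.sup_le.mpr
      intro b hb
      rw [hPsi] at hb
      rcases Multiset.mem_cons.mp hb with rfl | hb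
      · exact le_refl _
      · exact (mem_F hb).2
    · exact Multiset.le_sup (by rw [hPsi]; exact Multiset.mem_cons_self _ _)
  rw [Phi, hsupPsi, hPsi, Multiset.erase_cons_head, G_F hℓ hL']
  have : 2*ℓ - 1 = L.sup := by omega
  rw [this]
  exact hrec.symm

theorem odds_eq_C' (n : ℕ) (hn : 0 < n) :
    (Nat.Partition.odds n).card = (S (n+1)).ncard := by
  have hbij : Set.BijOn Phi (S (n+1)) (T n) :=
    Set.InvOn.bijOn ⟨fun M hM => (Phi_spec hM).2, fun L hL => (Psi_spec hn hL).2⟩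
      (fun M hM => (Phi_spec hM).1) (fun L hL => (Psi_spec hn hL).1)
  have h1 : (S (n+1)).ncard = (T n).ncard := by
    rw [← hbij.image_eq, Set.ncard_image_of_injOn hbij.injOn]
  have h2 : T n = (fun p : n.Partition => p.parts) '' ↑(Nat.Partition.odds n) := by
    ext M
    constructor
    · rintro ⟨hsum, hodd⟩
      refine ⟨⟨M, fun {i} hi => (hodd i hi).pos, hsum⟩, ?_, rfl⟩
      simp only [Finset.coe_filter, Nat.Partition.odds, Nat.Partition.restricted, Set.mem_setOf_eq, Finset.mem_univ,
        true_and]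
      exact fun i hi => Nat.not_even_iff_odd.mpr (hodd i hi)
    · rintro ⟨p, hp, rfl⟩
      simp only [Finset.coe_filter, Nat.Partition.odds, Nat.Partition.restricted, Set.mem_setOf_eq, Finset.mem_univ,
        true_and] at hp
      exact ⟨p.parts_sum, fun x hx => Nat.not_even_iff_odd.mp (hp x hx)⟩
  have hinj : Function.Injective (fun p : n.Partition => p.parts) := by
    intro a b h
    exact Nat.Partition.ext h
  rw [h1, h2, Set.ncard_image_of_injective _ hinj, Set.ncard_coe_finset]

end OddC

/-- The number of partitions of `n` into odd parts equals the number of partitions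
of `n+1` with largest part even and all parts not exceeding half the largest part
distinct. -/
theorem odds_eq_C (n : ℕ) (hn : 0 < n) :
    (Nat.Partition.odds n).card = Ccount (n + 1) :=
  OddC.odds_eq_C' n hn
end

section
/- For every positive integer n, twice the number of partitions of n into distinct parts equals the number of partitions of n+1 into non-negative parts in which the smallest part appears exactly twice and no other part is repeated. -/
/-- `Dcount k n` is the number of partitions of `n` into non-negative parts
(multisets of natural numbers, `0` allowed, summing to `n`) in which the smallest
part appears exactly `k` times and every other part appears exactly once. -/
noncomputable def Dcount (k n : ℕ) : ℕ :=
  Set.ncard {M : Multiset ℕ | M.sum = n ∧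
    ∃ s ∈ M, (∀ x ∈ M, s ≤ x) ∧ M.count s = k ∧
      ∀ x ∈ M, x ≠ s → M.count x = 1}

noncomputable def msmin (M : Multiset ℕ) : ℕ := sInf {x | x ∈ M}

lemma msmin_mem {M : Multiset ℕ} (h : M ≠ 0) : msmin M ∈ M := by
  obtain ⟨x, hx⟩ := Multiset.exists_mem_of_ne_zero h
  have hne : {x | x ∈ M}.Nonempty := ⟨x, by simp only [Set.mem_setOf_eq]; exact hx⟩
  exact Nat.sInf_mem hne

lemma msmin_le {M : Multiset ℕ} {x : ℕ} (hx : x ∈ M) : msmin M ≤ x :=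
  Nat.sInf_le (by simp only [Set.mem_setOf_eq]; exact hx)

lemma msmin_eq {M : Multiset ℕ} {s : ℕ} (hs : s ∈ M) (h : ∀ x ∈ M, s ≤ x) :
    msmin M = s :=
  le_antisymm (msmin_le hs)
    (le_csInf ⟨s, by simp only [Set.mem_setOf_eq]; exact hs⟩ h)

noncomputable def fD : Multiset ℕ × Bool → Multiset ℕ
  | (Q, false) => if 1 ∈ Q then 1 ::ₘ Q else 0 ::ₘ 0 ::ₘ 1 ::ₘ Q
  | (Q, true) =>
      if msmin Q + 1 ∈ Q then (msmin Q + 1) ::ₘ Q.erase (msmin Q)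
      else 0 ::ₘ 0 ::ₘ (msmin Q + 1) ::ₘ Q.erase (msmin Q)

noncomputable def gD0 (Q' : Multiset ℕ) : Multiset ℕ × Bool :=
  if msmin Q' = 1 then (Q'.erase 1, false)
  else ((msmin Q' - 1) ::ₘ Q'.erase (msmin Q'), true)

noncomputable def gD (M : Multiset ℕ) : Multiset ℕ × Bool :=
  if msmin M = 0 then gD0 ((M.erase 0).erase 0)
  else if msmin M = 1 then (M.erase 1, false)
  else ((msmin M - 1) ::ₘ M.erase (msmin M), true)

section main
variable (n : ℕ)

def Dom : Set (Multiset ℕ × Bool) :=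
  {p | p.1.sum = n ∧ p.1.Nodup ∧ ∀ x ∈ p.1, 0 < x}

def Tgt : Set (Multiset ℕ) :=
  {M : Multiset ℕ | M.sum = n + 1 ∧
    ∃ s ∈ M, (∀ x ∈ M, s ≤ x) ∧ M.count s = 2 ∧
      ∀ x ∈ M, x ≠ s → M.count x = 1}

variable {n}

lemma mem_dom {Q : Multiset ℕ} {b : Bool} :
    (Q, b) ∈ Dom n ↔ Q.sum = n ∧ Q.Nodup ∧ ∀ x ∈ Q, 0 < x := Iff.rfl

lemma tgt_facts {M : Multiset ℕ} (hM : M ∈ Tgt n) :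
    M.sum = n + 1 ∧ M.count (msmin M) = 2 ∧
      (∀ x ∈ M, x ≠ msmin M → M.count x = 1) ∧ ∀ x ∈ M, msmin M ≤ x := by
  obtain ⟨hsum, s, hsM, hle, hc2, hc1⟩ := hM
  have hmin : msmin M = s := msmin_eq hsM hle
  rw [hmin]
  exact ⟨hsum, hc2, hc1, fun x hx => hle x hx⟩

lemma mapsTo_fD (hn : 0 < n) : Set.MapsTo fD (Dom n) (Tgt n) := by
  intro p hp
  obtain ⟨Q, b⟩ := p
  obtain ⟨hsum, hnd, hpos⟩ := mem_dom.mp hp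
  have hQne : Q ≠ 0 := by
    intro h; rw [h] at hsum; simp at hsum; omega
  cases b with
  | false =>
    by_cases h1 : 1 ∈ Q
    · have hfd : fD (Q, false) = 1 ::ₘ Q := by simp [fD, h1]
      rw [Tgt, Set.mem_ofPred_eq, hfd]
      constructor
      · rw [Multiset.sum_cons]; omega
      refine ⟨1, Multiset.mem_cons_self _ _, ?_, ?_, ?_⟩
      · intro x hx
        rcases Multiset.mem_cons.mp hx with h | h
        · omega
        · exact hpos x h
      · rw [Multiset.count_cons_self, Multiset.count_eq_one_of_mem hnd h1]
      · intro x hx hx1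
        rw [Multiset.count_cons_of_ne hx1]
        rcases Multiset.mem_cons.mp hx with h | h
        · omega
        · exact Multiset.count_eq_one_of_mem hnd h
    · have hfd : fD (Q, false) = 0 ::ₘ 0 ::ₘ 1 ::ₘ Q := by simp [fD, h1]
      rw [Tgt, Set.mem_ofPred_eq, hfd]
      have h0 : 0 ∉ Q := fun h => absurd (hpos 0 h) (by omega)
      constructor
      · simp only [Multiset.sum_cons]; omega
      refine ⟨0, Multiset.mem_cons_self _ _, fun x _ => Nat.zero_le x, ?_, ?_⟩
      · simp [Multiset.count_cons, Multiset.count_eq_zero.mpr h0]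
      · intro x hx hx0
        simp only [Multiset.count_cons]
        rcases Multiset.mem_cons.mp hx with h | h
        · omega
        rcases Multiset.mem_cons.mp h with h | h
        · omega
        rcases Multiset.mem_cons.mp h with h | h
        · subst h
          simp [Multiset.count_eq_zero.mpr h1, hx0]
        · have hne1 : x ≠ 1 := fun e => h1 (e ▸ h)
          simp [hx0, hne1, Multiset.count_eq_one_of_mem hnd h]
  | true =>
    set m := msmin Q with hm
    have hmQ : m ∈ Q := msmin_mem hQne
    have hmpos : 0 < m := hpos m hmQ
    have hnm : m ∉ Q.erase m := hnd.notMem_erase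
    have herlb : ∀ x ∈ Q.erase m, m + 1 ≤ x := by
      intro x hx
      have hxQ := Multiset.mem_of_mem_erase hx
      have h1 := msmin_le hxQ
      have h2 : x ≠ m := fun e => hnm (e ▸ hx)
      omega
    have hsum' : m + (Q.erase m).sum = n := by
      have := congrArg Multiset.sum (Multiset.cons_erase hmQ)
      rw [Multiset.sum_cons] at this
      omega
    by_cases h1 : m + 1 ∈ Q
    · have hfd : fD (Q, true) = (m + 1) ::ₘ Q.erase m := by simp [fD, ← hm, h1]
      rw [Tgt, Set.mem_ofPred_eq, hfd]
      constructor
      · rw [Multiset.sum_cons]; omega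
      refine ⟨m + 1, Multiset.mem_cons_self _ _, ?_, ?_, ?_⟩
      · intro x hx
        rcases Multiset.mem_cons.mp hx with h | h
        · omega
        · exact herlb x h
      · rw [Multiset.count_cons_self, Multiset.count_erase_of_ne (by omega),
          Multiset.count_eq_one_of_mem hnd h1]
      · intro x hx hxne
        rw [Multiset.count_cons_of_ne hxne]
        rcases Multiset.mem_cons.mp hx with h | h
        · omega
        · have hxQ := Multiset.mem_of_mem_erase h
          have hxm : x ≠ m := fun e => hnm (e ▸ h)
          rw [Multiset.count_erase_of_ne hxm, Multiset.count_eq_one_of_mem hnd hxQ]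
    · have hfd : fD (Q, true) = 0 ::ₘ 0 ::ₘ (m + 1) ::ₘ Q.erase m := by simp [fD, ← hm, h1]
      rw [Tgt, Set.mem_ofPred_eq, hfd]
      have h0er : (0 : ℕ) ∉ Q.erase m :=
        fun h => absurd (hpos 0 (Multiset.mem_of_mem_erase h)) (by omega)
      constructor
      · simp only [Multiset.sum_cons]; omega
      refine ⟨0, Multiset.mem_cons_self _ _, fun x _ => Nat.zero_le x, ?_, ?_⟩
      · simp [Multiset.count_cons, Multiset.count_eq_zero.mpr h0er]
      · intro x hx hx0
        have h1er : m + 1 ∉ Q.erase m := fun h => h1 (Multiset.mem_of_mem_erase h)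
        simp only [Multiset.count_cons]
        rcases Multiset.mem_cons.mp hx with h | h
        · omega
        rcases Multiset.mem_cons.mp h with h | h
        · omega
        rcases Multiset.mem_cons.mp h with h | h
        · subst h
          simp [Multiset.count_eq_zero.mpr h1er, hx0]
        · have hxQ := Multiset.mem_of_mem_erase h
          have hxm : x ≠ m := fun e => hnm (e ▸ h)
          have hxm1 : x ≠ m + 1 := fun e => h1 (e ▸ hxQ)
          simp [hx0, hxm1, Multiset.count_erase_of_ne hxm,
            Multiset.count_eq_one_of_mem hnd hxQ]

lemma mapsTo_gD (hn : 0 < n) : Set.MapsTo gD (Tgt n) (Dom n) := by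
  intro M hM
  obtain ⟨hsum, hc2, hc1, hlb⟩ := tgt_facts hM
  set s := msmin M with hs
  have hsM : s ∈ M := by
    rw [← Multiset.count_pos, hc2]; omega
  have hcount_le : ∀ x, x ≠ s → M.count x ≤ 1 := by
    intro x hx
    by_cases h : x ∈ M
    · exact le_of_eq (hc1 x h hx)
    · simp [Multiset.count_eq_zero.mpr h]
  have hersum : s + (M.erase s).sum = n + 1 := by
    have := congrArg Multiset.sum (Multiset.cons_erase hsM)
    rw [Multiset.sum_cons] at this
    omega
  rcases Nat.lt_or_ge s 2 with hlt | hge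
  · rcases Nat.lt_or_ge s 1 with hlt0 | hge1
    · -- s = 0
      have hs0 : s = 0 := by omega
      have hgM : gD M = gD0 ((M.erase 0).erase 0) := by
        rw [gD, if_pos (by omega : msmin M = 0)]
      set Q' := (M.erase 0).erase 0 with hQ'
      have hc0 : M.count 0 = 2 := hs0 ▸ hc2
      have hcQ' : ∀ x, Q'.count x = if x = 0 then 0 else M.count x := by
        intro x
        by_cases hx0 : x = 0
        · subst hx0
          simp [hQ', Multiset.count_erase_self, hc0]
        · simp [hQ', Multiset.count_erase_of_ne hx0, hx0]
      have hmemQ' : ∀ x, x ∈ Q' ↔ x ∈ M ∧ x ≠ 0 := by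
        intro x
        rw [← Multiset.count_pos, hcQ', ← Multiset.count_pos]
        by_cases hx0 : x = 0 <;> simp [hx0]
      have hsumQ' : Q'.sum = n + 1 := by
        have h0M : (0:ℕ) ∈ M := hs0 ▸ hsM
        have h0M' : (0:ℕ) ∈ M.erase 0 := by
          rw [← Multiset.count_pos, Multiset.count_erase_self, hc0]
          omega
        have e1 := congrArg Multiset.sum (Multiset.cons_erase h0M)
        have e2 := congrArg Multiset.sum (Multiset.cons_erase h0M')
        rw [Multiset.sum_cons] at e1 e2
        simp only [Nat.zero_add] at e1 e2
        rw [hQ', e2, e1, hsum]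
      have hQ'ne : Q' ≠ 0 := by
        intro h; rw [h] at hsumQ'; simp at hsumQ'
      set t := msmin Q' with ht
      have htQ' : t ∈ Q' := msmin_mem hQ'ne
      have htpos : 0 < t := by
        rcases (hmemQ' t).mp htQ' with ⟨_, h⟩
        omega
      have htM : t ∈ M := ((hmemQ' t).mp htQ').1
      have hct : M.count t = 1 := hc1 t htM (by omega)
      have hlbQ' : ∀ x ∈ Q', t ≤ x := fun x hx => msmin_le hx
      by_cases ht1 : t = 1
      · have hgm2 : gD M = (Q'.erase 1, false) := by
          rw [hgM, gD0, if_pos (by omega : msmin Q' = 1)]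
        rw [hgm2, mem_dom]
        refine ⟨?_, ?_, ?_⟩
        · have h1Q' : (1:ℕ) ∈ Q' := ht1 ▸ htQ'
          have := congrArg Multiset.sum (Multiset.cons_erase h1Q')
          rw [Multiset.sum_cons] at this
          omega
        · rw [Multiset.nodup_iff_count_le_one]
          intro a
          by_cases ha : a = 1
          · subst ha
            rw [Multiset.count_erase_self, hcQ', if_neg (by norm_num : ¬(1:ℕ) = 0)]
            have := hcount_le 1 (by omega)
            omega
          · rw [Multiset.count_erase_of_ne ha, hcQ']
            by_cases ha0 : a = 0
            · simp [ha0]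
            · simp only [ha0, if_false]
              exact hcount_le a (by omega)
        · intro x hx
          have := hlbQ' x (Multiset.mem_of_mem_erase hx)
          omega
      · have hgm2 : gD M = ((t - 1) ::ₘ Q'.erase t, true) := by
          rw [hgM, gD0, if_neg (by omega : ¬ msmin Q' = 1)]
        rw [hgm2, mem_dom]
        have htge2 : 2 ≤ t := by omega
        have hctQ' : Q'.count t = 1 := by rw [hcQ', if_neg (by omega : ¬ t = 0), hct]
        have hnt : t - 1 ∉ Q'.erase t := by
          intro h
          have := hlbQ' _ (Multiset.mem_of_mem_erase h)
          omega
        refine ⟨?_, ?_, ?_⟩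
        · have := congrArg Multiset.sum (Multiset.cons_erase htQ')
          rw [Multiset.sum_cons] at this
          rw [Multiset.sum_cons]
          omega
        · rw [Multiset.nodup_iff_count_le_one]
          intro a
          rw [Multiset.count_cons]
          by_cases hat : a = t - 1
          · simp [hat, Multiset.count_eq_zero.mpr hnt]
          · simp only [hat, if_false]
            by_cases hat' : a = t
            · subst hat'; rw [Multiset.count_erase_self, hctQ']; omega
            · rw [Multiset.count_erase_of_ne hat', hcQ']
              by_cases ha0 : a = 0
              · simp [ha0]
              · simp only [ha0, if_false]
                have := hcount_le a (by omega)
                omega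
        · intro x hx
          rcases Multiset.mem_cons.mp hx with h | h
          · omega
          · have := hlbQ' x (Multiset.mem_of_mem_erase h)
            omega
    · -- s = 1
      have hs1 : s = 1 := by omega
      have hgm : gD M = (M.erase 1, false) := by
        rw [gD, if_neg (by omega : ¬ msmin M = 0), if_pos (by omega : msmin M = 1)]
      rw [hgm, mem_dom]
      refine ⟨?_, ?_, ?_⟩
      · have h2 : (1:ℕ) + (M.erase 1).sum = n + 1 := hs1 ▸ hersum
        omega
      · rw [Multiset.nodup_iff_count_le_one]
        intro a
        by_cases ha : a = 1
        · subst ha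
          rw [Multiset.count_erase_self]
          have : M.count 1 = 2 := hs1 ▸ hc2
          omega
        · rw [Multiset.count_erase_of_ne ha]
          exact hcount_le a (by omega)
      · intro x hx
        have := hlb x (Multiset.mem_of_mem_erase hx)
        omega
  · -- s ≥ 2
    have hgm : gD M = ((s - 1) ::ₘ M.erase s, true) := by
      rw [gD, if_neg (by omega : ¬ msmin M = 0), if_neg (by omega : ¬ msmin M = 1)]
    rw [hgm, mem_dom]
    have hns : s - 1 ∉ M.erase s := by
      intro h
      have := hlb _ (Multiset.mem_of_mem_erase h)
      omega
    refine ⟨?_, ?_, ?_⟩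
    · rw [Multiset.sum_cons]
      omega
    · rw [Multiset.nodup_iff_count_le_one]
      intro a
      rw [Multiset.count_cons]
      by_cases has : a = s - 1
      · simp [has, Multiset.count_eq_zero.mpr hns]
      · simp only [has, if_false]
        by_cases ha : a = s
        · subst ha; rw [Multiset.count_erase_self, hc2]
        · rw [Multiset.count_erase_of_ne ha]
          have := hcount_le a ha
          omega
    · intro x hx
      rcases Multiset.mem_cons.mp hx with h | h
      · omega
      · have := hlb x (Multiset.mem_of_mem_erase h)
        omega

lemma leftInv (hn : 0 < n) : Set.LeftInvOn gD fD (Dom n) := by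
  intro p hp
  obtain ⟨Q, b⟩ := p
  obtain ⟨hsum, hnd, hpos⟩ := mem_dom.mp hp
  have hQne : Q ≠ 0 := by intro h; rw [h] at hsum; simp at hsum; omega
  cases b with
  | false =>
    by_cases h1 : 1 ∈ Q
    · have hfd : fD (Q, false) = 1 ::ₘ Q := by simp [fD, h1]
      rw [hfd]
      have hmin : msmin (1 ::ₘ Q) = 1 := msmin_eq (Multiset.mem_cons_self _ _) (by
        intro x hx
        rcases Multiset.mem_cons.mp hx with h | h
        · omega
        · exact hpos x h)
      rw [gD, if_neg (by rw [hmin]; omega), if_pos hmin, Multiset.erase_cons_head]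
    · have hfd : fD (Q, false) = 0 ::ₘ 0 ::ₘ 1 ::ₘ Q := by simp [fD, h1]
      rw [hfd]
      have hmin : msmin (0 ::ₘ 0 ::ₘ 1 ::ₘ Q) = 0 :=
        msmin_eq (Multiset.mem_cons_self _ _) (fun x _ => Nat.zero_le x)
      have herase : (((0 ::ₘ 0 ::ₘ 1 ::ₘ Q).erase 0).erase 0) = 1 ::ₘ Q := by
        rw [Multiset.erase_cons_head, Multiset.erase_cons_head]
      have hmin2 : msmin (1 ::ₘ Q) = 1 := msmin_eq (Multiset.mem_cons_self _ _) (by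
        intro x hx
        rcases Multiset.mem_cons.mp hx with h | h
        · omega
        · exact hpos x h)
      rw [gD, if_pos hmin, herase, gD0, if_pos hmin2, Multiset.erase_cons_head]
  | true =>
    set m := msmin Q with hm
    have hmQ : m ∈ Q := msmin_mem hQne
    have hmpos : 0 < m := hpos m hmQ
    have hnm : m ∉ Q.erase m := hnd.notMem_erase
    have herlb : ∀ x ∈ Q.erase m, m + 1 ≤ x := by
      intro x hx
      have hxQ := Multiset.mem_of_mem_erase hx
      have h1 := msmin_le hxQ
      have h2 : x ≠ m := fun e => hnm (e ▸ hx)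
      omega
    by_cases h1 : m + 1 ∈ Q
    · have hfd : fD (Q, true) = (m + 1) ::ₘ Q.erase m := by simp [fD, ← hm, h1]
      rw [hfd]
      have hmin : msmin ((m + 1) ::ₘ Q.erase m) = m + 1 :=
        msmin_eq (Multiset.mem_cons_self _ _) (by
          intro x hx
          rcases Multiset.mem_cons.mp hx with h | h
          · omega
          · exact herlb x h)
      rw [gD, if_neg (by rw [hmin]; omega), if_neg (by rw [hmin]; omega), hmin,
        Multiset.erase_cons_head]
      have : m + 1 - 1 = m := by omega
      rw [this, Multiset.cons_erase hmQ]
    · have hfd : fD (Q, true) = 0 ::ₘ 0 ::ₘ (m + 1) ::ₘ Q.erase m := by simp [fD, ← hm, h1]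
      rw [hfd]
      have hmin : msmin (0 ::ₘ 0 ::ₘ (m + 1) ::ₘ Q.erase m) = 0 :=
        msmin_eq (Multiset.mem_cons_self _ _) (fun x _ => Nat.zero_le x)
      have herase : (((0 ::ₘ 0 ::ₘ (m + 1) ::ₘ Q.erase m).erase 0).erase 0)
          = (m + 1) ::ₘ Q.erase m := by
        rw [Multiset.erase_cons_head, Multiset.erase_cons_head]
      have hmin2 : msmin ((m + 1) ::ₘ Q.erase m) = m + 1 :=
        msmin_eq (Multiset.mem_cons_self _ _) (by
          intro x hx
          rcases Multiset.mem_cons.mp hx with h | h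
          · omega
          · exact herlb x h)
      rw [gD, if_pos hmin, herase, gD0, if_neg (by rw [hmin2]; omega), hmin2,
        Multiset.erase_cons_head]
      have : m + 1 - 1 = m := by omega
      rw [this, Multiset.cons_erase hmQ]

lemma rightInv (hn : 0 < n) : Set.RightInvOn gD fD (Tgt n) := by
  intro M hM
  obtain ⟨hsum, hc2, hc1, hlb⟩ := tgt_facts hM
  set s := msmin M with hs
  have hsM : s ∈ M := by rw [← Multiset.count_pos, hc2]; omega
  rcases Nat.lt_or_ge s 2 with hlt | hge
  · rcases Nat.lt_or_ge s 1 with hlt0 | hge1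
    · -- s = 0
      have hs0 : s = 0 := by omega
      have hgM : gD M = gD0 ((M.erase 0).erase 0) := by
        rw [gD, if_pos (by omega : msmin M = 0)]
      set Q' := (M.erase 0).erase 0 with hQ'
      have hc0 : M.count 0 = 2 := hs0 ▸ hc2
      have h0M : (0:ℕ) ∈ M := hs0 ▸ hsM
      have h0M' : (0:ℕ) ∈ M.erase 0 := by
        rw [← Multiset.count_pos, Multiset.count_erase_self, hc0]
        omega
      have hMQ' : 0 ::ₘ 0 ::ₘ Q' = M := by
        rw [hQ', Multiset.cons_erase h0M', Multiset.cons_erase h0M]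
      have hcQ' : ∀ x, Q'.count x = if x = 0 then 0 else M.count x := by
        intro x
        by_cases hx0 : x = 0
        · subst hx0
          simp [hQ', Multiset.count_erase_self, hc0]
        · simp [hQ', Multiset.count_erase_of_ne hx0, hx0]
      have hmemQ' : ∀ x, x ∈ Q' ↔ x ∈ M ∧ x ≠ 0 := by
        intro x
        rw [← Multiset.count_pos, hcQ', ← Multiset.count_pos]
        by_cases hx0 : x = 0 <;> simp [hx0]
      have hQ'ne : Q' ≠ 0 := by
        intro h
        have : M.sum = 0 := by rw [← hMQ', h]; simp
        omega
      set t := msmin Q' with ht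
      have htQ' : t ∈ Q' := msmin_mem hQ'ne
      have htpos : 0 < t := by
        rcases (hmemQ' t).mp htQ' with ⟨_, h⟩
        omega
      have htM : t ∈ M := ((hmemQ' t).mp htQ').1
      have hct : M.count t = 1 := hc1 t htM (by omega)
      have hctQ' : Q'.count t = 1 := by
        rw [hcQ', if_neg (by omega : ¬ t = 0), hct]
      have hlbQ' : ∀ x ∈ Q', t ≤ x := fun x hx => msmin_le hx
      by_cases ht1 : t = 1
      · have hgm2 : gD M = (Q'.erase 1, false) := by
          rw [hgM, gD0, if_pos (by omega : msmin Q' = 1)]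
        rw [hgm2]
        have h1Q' : (1:ℕ) ∈ Q' := ht1 ▸ htQ'
        have hn1 : (1:ℕ) ∉ Q'.erase 1 := by
          have h := hctQ'
          rw [ht1] at h
          rw [← Multiset.count_pos, Multiset.count_erase_self, h]
          omega
        have hfd : fD (Q'.erase 1, false) = 0 ::ₘ 0 ::ₘ 1 ::ₘ Q'.erase 1 := by
          simp [fD, hn1]
        rw [hfd, Multiset.cons_erase h1Q', hMQ']
      · have hgm2 : gD M = ((t - 1) ::ₘ Q'.erase t, true) := by
          rw [hgM, gD0, if_neg (by omega : ¬ msmin Q' = 1)]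
        rw [hgm2]
        have htge2 : 2 ≤ t := by omega
        have hminR : msmin ((t - 1) ::ₘ Q'.erase t) = t - 1 :=
          msmin_eq (Multiset.mem_cons_self _ _) (by
            intro x hx
            rcases Multiset.mem_cons.mp hx with h | h
            · omega
            · have := hlbQ' x (Multiset.mem_of_mem_erase h)
              omega)
        have hntR : ¬ (msmin ((t - 1) ::ₘ Q'.erase t) + 1 ∈ (t - 1) ::ₘ Q'.erase t) := by
          rw [hminR, (by omega : t - 1 + 1 = t)]
          intro h
          rcases Multiset.mem_cons.mp h with h | h
          · omega
          · rw [← Multiset.count_pos, Multiset.count_erase_self, hctQ'] at h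
            omega
        have hfd : fD ((t - 1) ::ₘ Q'.erase t, true)
            = 0 ::ₘ 0 ::ₘ (msmin ((t - 1) ::ₘ Q'.erase t) + 1) ::ₘ
              ((t - 1) ::ₘ Q'.erase t).erase (msmin ((t - 1) ::ₘ Q'.erase t)) := by
          simp only [fD]
          rw [if_neg hntR]
        rw [hfd, hminR, Multiset.erase_cons_head, (by omega : t - 1 + 1 = t),
          Multiset.cons_erase htQ', hMQ']
    · -- s = 1
      have hs1 : s = 1 := by omega
      have hgm : gD M = (M.erase 1, false) := by
        rw [gD, if_neg (by omega : ¬ msmin M = 0), if_pos (by omega : msmin M = 1)]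
      rw [hgm]
      have h1M : (1:ℕ) ∈ M := hs1 ▸ hsM
      have h1e : (1:ℕ) ∈ M.erase 1 := by
        have h := hc2
        rw [hs1] at h
        rw [← Multiset.count_pos, Multiset.count_erase_self, h]
        omega
      have hfd : fD (M.erase 1, false) = 1 ::ₘ M.erase 1 := by simp [fD, h1e]
      rw [hfd, Multiset.cons_erase h1M]
  · -- s ≥ 2
    have hgm : gD M = ((s - 1) ::ₘ M.erase s, true) := by
      rw [gD, if_neg (by omega : ¬ msmin M = 0), if_neg (by omega : ¬ msmin M = 1)]
    rw [hgm]
    have hminR : msmin ((s - 1) ::ₘ M.erase s) = s - 1 :=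
      msmin_eq (Multiset.mem_cons_self _ _) (by
        intro x hx
        rcases Multiset.mem_cons.mp hx with h | h
        · omega
        · have := hlb x (Multiset.mem_of_mem_erase h)
          omega)
    have hse : s ∈ M.erase s := by
      rw [← Multiset.count_pos, Multiset.count_erase_self, hc2]
      omega
    have hmemR : msmin ((s - 1) ::ₘ M.erase s) + 1 ∈ (s - 1) ::ₘ M.erase s := by
      rw [hminR, (by omega : s - 1 + 1 = s)]
      exact Multiset.mem_cons_of_mem hse
    have hfd : fD ((s - 1) ::ₘ M.erase s, true)
        = (msmin ((s - 1) ::ₘ M.erase s) + 1) ::ₘ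
          ((s - 1) ::ₘ M.erase s).erase (msmin ((s - 1) ::ₘ M.erase s)) := by
      simp only [fD]
      rw [if_pos hmemR]
    rw [hfd, hminR, Multiset.erase_cons_head, (by omega : s - 1 + 1 = s),
      Multiset.cons_erase hsM]

lemma dom_eq_coe :
    (↑(((Nat.Partition.distincts n).image (fun p => p.parts)) ×ˢ
      (Finset.univ : Finset Bool)) : Set (Multiset ℕ × Bool)) = Dom n := by
  ext ⟨Q, b⟩
  simp only [Finset.coe_product, Set.mem_prod, Finset.mem_coe, Finset.mem_image,
    Finset.mem_univ, and_true, Nat.Partition.distincts, Finset.mem_filter]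
  constructor
  · rintro ⟨p, hp, rfl⟩
    have hnd : p.parts.Nodup := by
      simpa using hp
    exact ⟨p.parts_sum, hnd, fun x hx => p.parts_pos hx⟩
  · rintro ⟨hsum, hnd, hpos⟩
    exact ⟨⟨Q, fun {i} hi => hpos i hi, hsum⟩, by simpa using hnd, rfl⟩

end main

/-- Twice the number of partitions of `n` into distinct parts equals the number of
partitions of `n+1` into non-negative parts with the smallest part appearing exactly
twice and no other part repeated. -/
theorem two_distincts_eq_D (n : ℕ) (hn : 0 < n) :
    2 * (Nat.Partition.distincts n).card = Dcount 2 (n + 1) := by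
  classical
  have hbij : Set.BijOn fD (Dom n) (Tgt n) :=
    Set.InvOn.bijOn ⟨leftInv hn, rightInv hn⟩ (mapsTo_fD hn) (mapsTo_gD hn)
  have hT : Dcount 2 (n + 1) = (Tgt n).ncard := rfl
  rw [hT, ← hbij.image_eq, Set.ncard_image_of_injOn hbij.injOn, ← dom_eq_coe,
    Set.ncard_coe_finset, Finset.card_product, Finset.card_univ, Fintype.card_bool,
    Finset.card_image_of_injOn (fun p _ q _ h => by cases p; cases q; simpa using h)]
  ring
end

section
/- For every positive integer n, the number of partitions of n into odd parts equals the number of partitions of n+2 into odd parts whose largest part occurs exactly once. -/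
/-- `Ecount n` is the number of partitions of `n` into odd parts in which the
largest part occurs exactly once. -/
noncomputable def Ecount (n : ℕ) : ℕ :=
  Set.ncard {M : Multiset ℕ | M.sum = n ∧ (∀ x ∈ M, Odd x) ∧
    ∃ L ∈ M, (∀ x ∈ M, x ≤ L) ∧ M.count L = 1}

lemma multiset_sup_mem (M : Multiset ℕ) (h : M ≠ 0) : M.sup ∈ M := by
  induction M using Multiset.induction with
  | empty => simp at h
  | cons a s ih =>
    rw [Multiset.sup_cons]
    rcases eq_or_ne s 0 with rfl | hs
    · simp
    · rcases le_total a s.sup with hle | hle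
      · rw [sup_eq_right.mpr hle]; exact Multiset.mem_cons_of_mem (ih hs)
      · rw [sup_eq_left.mpr hle]; exact Multiset.mem_cons_self a s

/-- The number of partitions of `n` into odd parts equals the number of partitions
of `n+2` into odd parts whose largest part occurs exactly once. -/
theorem odds_eq_E (n : ℕ) (hn : 0 < n) :
    (Nat.Partition.odds n).card = Ecount (n + 2) := by
  classical
  set S : Set (Multiset ℕ) := {M : Multiset ℕ | M.sum = n + 2 ∧ (∀ x ∈ M, Odd x) ∧
    ∃ L ∈ M, (∀ x ∈ M, x ≤ L) ∧ M.count L = 1} with hS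
  set f : n.Partition → Multiset ℕ :=
    fun p => (p.parts.sup + 2) ::ₘ p.parts.erase p.parts.sup with hf
  -- basic facts about partitions in odds n
  have hodd : ∀ p : n.Partition, p ∈ Nat.Partition.odds n → ∀ x ∈ p.parts, Odd x := by
    intro p hp x hx
    rw [Nat.Partition.odds, Nat.Partition.restricted, Finset.mem_filter] at hp
    exact Nat.not_even_iff_odd.mp (hp.2 x hx)
  have hne : ∀ p : n.Partition, p.parts ≠ 0 := by
    intro p h
    have := p.parts_sum
    rw [h] at this
    simp at this
    omega
  have hsupmem : ∀ p : n.Partition, p.parts.sup ∈ p.parts :=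
    fun p => multiset_sup_mem _ (hne p)
  have hbij : Set.BijOn f ↑(Nat.Partition.odds n) S := by
    refine ⟨?_, ?_, ?_⟩
    · -- maps to
      intro p hp
      rw [Finset.mem_coe] at hp
      have hLmem := hsupmem p
      have hsum : p.parts.sup + (p.parts.erase p.parts.sup).sum = n := by
        have h0 := Multiset.cons_erase hLmem
        calc p.parts.sup + (p.parts.erase p.parts.sup).sum
              = (p.parts.sup ::ₘ p.parts.erase p.parts.sup).sum := by
              rw [Multiset.sum_cons]
          _ = p.parts.sum := by rw [h0]
          _ = n := p.parts_sum
      constructor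
      · simp only [hf, Multiset.sum_cons]; omega
      constructor
      · intro x hx
        rcases Multiset.mem_cons.mp hx with rfl | hx
        · have : Odd p.parts.sup := hodd p hp _ hLmem
          rcases this with ⟨k, hk⟩; exact ⟨k + 1, by omega⟩
        · exact hodd p hp x (Multiset.mem_of_mem_erase hx)
      · refine ⟨p.parts.sup + 2, Multiset.mem_cons_self _ _, ?_, ?_⟩
        · intro x hx
          rcases Multiset.mem_cons.mp hx with rfl | hx
          · exact le_refl _
          · have : x ≤ p.parts.sup := Multiset.le_sup (Multiset.mem_of_mem_erase hx)
            omega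
        · rw [Multiset.count_cons_self]
          have h1 : p.parts.sup + 2 ∉ p.parts.erase p.parts.sup := by
            intro h
            have : p.parts.sup + 2 ≤ p.parts.sup :=
              Multiset.le_sup (Multiset.mem_of_mem_erase h)
            omega
          rw [Multiset.count_eq_zero_of_notMem h1]
    · -- inj on
      intro p hp q hq hfpq
      have key : ∀ r : n.Partition, (f r).sup = r.parts.sup + 2 := by
        intro r
        rw [hf]
        simp only [Multiset.sup_cons]
        have h1 : (r.parts.erase r.parts.sup).sup ≤ r.parts.sup :=
          Multiset.sup_le.mpr fun x hx => Multiset.le_sup (Multiset.mem_of_mem_erase hx)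
        exact sup_eq_left.mpr (by omega)
      have hLeq : p.parts.sup = q.parts.sup := by
        have := key p
        rw [hfpq, key q] at this
        omega
      have herase : p.parts.erase p.parts.sup = q.parts.erase q.parts.sup := by
        have h1 : (f p).erase (p.parts.sup + 2) = p.parts.erase p.parts.sup :=
          Multiset.erase_cons_head _ _
        have h2 : (f q).erase (q.parts.sup + 2) = q.parts.erase q.parts.sup :=
          Multiset.erase_cons_head _ _
        rw [← h1, ← h2, hfpq, hLeq]
      have : p.parts = q.parts := by
        rw [← Multiset.cons_erase (hsupmem p), ← Multiset.cons_erase (hsupmem q),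
          herase, hLeq]
      exact Nat.Partition.ext this
    · -- surj on
      intro M hM
      obtain ⟨hsum, hodds, L, hLmem, hLmax, hLcount⟩ := hM
      have hLodd : L % 2 = 1 := Nat.odd_iff.mp (hodds L hLmem)
      have hL3 : 3 ≤ L := by
        by_contra h
        have hL1 : L = 1 := by omega
        have hall : ∀ b ∈ M, b = 1 := by
          intro b hb
          have h1 := hLmax b hb
          have h2 := Nat.odd_iff.mp (hodds b hb)
          omega
        have hcard : Multiset.count 1 M = Multiset.card M :=
          Multiset.count_eq_card.mpr fun b hb => (hall b hb).symm
        have hsum' : M.sum ≤ Multiset.card M := by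
          simpa using Multiset.sum_le_card_nsmul M 1 (fun x hx => le_of_eq (hall x hx))
        rw [hL1] at hLcount
        omega
      have hLle : L ≤ M.sum := Multiset.le_sum_of_mem hLmem
      have hErL : L ∉ M.erase L := by
        intro h
        have := Multiset.count_erase_self L M
        have hpos := Multiset.count_pos.mpr h
        omega
      have hEr : ∀ x ∈ M.erase L, x ≤ L - 2 := by
        intro x hx
        have hxM := Multiset.mem_of_mem_erase hx
        have h1 := hLmax x hxM
        have h2 := Nat.odd_iff.mp (hodds x hxM)
        have h3 : x ≠ L := fun h => hErL (h ▸ hx)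
        omega
      have hEsum : (M.erase L).sum = n + 2 - L := by
        have h0 := Multiset.cons_erase hLmem
        have : (L ::ₘ M.erase L).sum = M.sum := by rw [h0]
        rw [Multiset.sum_cons] at this
        omega
      set M' : Multiset ℕ := (L - 2) ::ₘ M.erase L with hM'
      have hM'sum : M'.sum = n := by
        rw [hM', Multiset.sum_cons]; omega
      have hM'pos : ∀ x ∈ M', 0 < x := by
        intro x hx
        rcases Multiset.mem_cons.mp hx with rfl | hx
        · omega
        · have := Nat.odd_iff.mp (hodds x (Multiset.mem_of_mem_erase hx))
          omega
      refine ⟨⟨M', fun {i} hi => hM'pos i hi, hM'sum⟩, ?_, ?_⟩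
      · rw [Finset.mem_coe, Nat.Partition.odds, Nat.Partition.restricted, Finset.mem_filter]
        refine ⟨Finset.mem_univ _, ?_⟩
        intro i hi
        rw [Nat.even_iff]
        rcases Multiset.mem_cons.mp hi with rfl | hi
        · omega
        · have := Nat.odd_iff.mp (hodds i (Multiset.mem_of_mem_erase hi))
          omega
      · show (M'.sup + 2) ::ₘ M'.erase M'.sup = M
        have hsup : M'.sup = L - 2 := by
          rw [hM', Multiset.sup_cons]
          have : (M.erase L).sup ≤ L - 2 := Multiset.sup_le.mpr hEr
          exact sup_eq_left.mpr this
        rw [hsup]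
        have h1 : M'.erase (L - 2) = M.erase L := Multiset.erase_cons_head _ _
        rw [h1]
        have h2 : L - 2 + 2 = L := by omega
        rw [h2]
        exact Multiset.cons_erase hLmem
  calc (Nat.Partition.odds n).card = (↑(Nat.Partition.odds n) : Set n.Partition).ncard := by
        rw [Set.ncard_coe_finset]
    _ = S.ncard := by
        rw [← hbij.image_eq]
        exact (Set.ncard_image_of_injOn hbij.injOn).symm
    _ = Ecount (n + 2) := rfl
end

section
/- For every positive integer n, the number of partitions of n into odd parts equals the number of partitions of n+1 having a unique largest part which is even, while all other parts are odd. -/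
/-- `Fcount n` is the number of partitions of `n` (into positive parts) having a
unique largest part which is even, while all other parts are odd. -/
noncomputable def Fcount (n : ℕ) : ℕ :=
  Set.ncard {M : Multiset ℕ | M.sum = n ∧ (∀ x ∈ M, 0 < x) ∧
    ∃ L ∈ M, Even L ∧ (∀ x ∈ M, x ≤ L) ∧ M.count L = 1 ∧
      ∀ x ∈ M, x ≠ L → Odd x}

lemma multiset_sup_mem_s4 (s : Multiset ℕ) (hs : s ≠ 0) : s.sup ∈ s := by
  induction s using Multiset.induction with
  | empty => simp at hs
  | cons a s ih =>
    rw [Multiset.sup_cons]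
    rcases eq_or_ne s 0 with rfl | h
    · simp
    · rcases le_total a s.sup with h1 | h1
      · rw [sup_eq_right.2 h1]
        exact Multiset.mem_cons_of_mem (ih h)
      · rw [sup_eq_left.2 h1]; exact Multiset.mem_cons_self a s

/-- The bijection: add one to a copy of the largest part. -/
noncomputable def fmap (n : ℕ) (p : Nat.Partition n) : Multiset ℕ :=
  (p.parts.sup + 1) ::ₘ p.parts.erase p.parts.sup

/-- The number of partitions of `n` into odd parts equals the number of partitions
of `n+1` with a unique largest even part and all other parts odd. -/
theorem odds_eq_F (n : ℕ) (hn : 0 < n) :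
    (Nat.Partition.odds n).card = Fcount (n + 1) := by
  classical
  set S : Set (Multiset ℕ) := {M : Multiset ℕ | M.sum = n + 1 ∧ (∀ x ∈ M, 0 < x) ∧
    ∃ L ∈ M, Even L ∧ (∀ x ∈ M, x ≤ L) ∧ M.count L = 1 ∧
      ∀ x ∈ M, x ≠ L → Odd x} with hS
  have parts_ne : ∀ p : Nat.Partition n, p.parts ≠ 0 := by
    intro p hp
    have := p.parts_sum
    rw [hp] at this
    simp at this
    omega
  have sup_mem : ∀ p : Nat.Partition n, p.parts.sup ∈ p.parts := fun p =>
    multiset_sup_mem_s4 _ (parts_ne p)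
  -- the image is S
  have himg : fmap n '' ((Nat.Partition.odds n : Finset (Nat.Partition n)) : Set _) = S := by
    ext M
    constructor
    · rintro ⟨p, hp, rfl⟩
      rw [Finset.mem_coe, Nat.Partition.odds, Nat.Partition.restricted, Finset.mem_filter] at hp
      obtain ⟨-, hodd⟩ := hp
      have hLmem : p.parts.sup ∈ p.parts := sup_mem p
      have hcons : p.parts.sup ::ₘ p.parts.erase p.parts.sup = p.parts :=
        Multiset.cons_erase hLmem
      have hsum : p.parts.sup + (p.parts.erase p.parts.sup).sum = n := by
        rw [← Multiset.sum_cons, hcons, p.parts_sum]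
      have hLodd : Odd p.parts.sup := Nat.not_even_iff_odd.1 (hodd _ hLmem)
      refine ⟨?_, ?_, p.parts.sup + 1, Multiset.mem_cons_self _ _, ?_, ?_, ?_, ?_⟩
      · rw [fmap, Multiset.sum_cons]; omega
      · intro x hx
        rw [fmap] at hx
        rcases Multiset.mem_cons.1 hx with rfl | hx
        · omega
        · exact p.parts_pos (Multiset.mem_of_mem_erase hx)
      · exact Odd.add_one hLodd
      · intro x hx
        rw [fmap] at hx
        rcases Multiset.mem_cons.1 hx with rfl | hx
        · exact le_refl _
        · have := Multiset.le_sup (Multiset.mem_of_mem_erase hx)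
          omega
      · have hnot : (p.parts.sup + 1) ∉ p.parts.erase p.parts.sup := by
          intro h
          have := hodd _ (Multiset.mem_of_mem_erase h)
          exact this (Odd.add_one hLodd)
        rw [fmap, Multiset.count_cons_self, Multiset.count_eq_zero_of_notMem hnot]
      · intro x hx hne
        rw [fmap] at hx
        rcases Multiset.mem_cons.1 hx with rfl | hx
        · exact absurd rfl hne
        · exact Nat.not_even_iff_odd.1 (hodd _ (Multiset.mem_of_mem_erase hx))
    · rintro ⟨hsum, hpos, L, hLmem, hLeven, hLmax, hLcount, hodd⟩
      have hL2 : 2 ≤ L := by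
        have h1 := hpos L hLmem
        rcases hLeven with ⟨k, hk⟩
        omega
      have hcons : L ::ₘ M.erase L = M := Multiset.cons_erase hLmem
      have hsum' : L + (M.erase L).sum = n + 1 := by
        rw [← Multiset.sum_cons, hcons, hsum]
      have hLnot : L ∉ M.erase L := by
        intro h
        have := Multiset.count_pos.2 h
        rw [Multiset.count_erase_self] at this
        omega
      have herasene : ∀ x ∈ M.erase L, x ≠ L := by
        intro x hx hxe; exact hLnot (hxe ▸ hx)
      have heraseodd : ∀ x ∈ M.erase L, Odd x :=
        fun x hx => hodd x (Multiset.mem_of_mem_erase hx) (herasene x hx)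
      have heraselt : ∀ x ∈ M.erase L, x ≤ L - 1 := by
        intro x hx
        have h1 := hLmax x (Multiset.mem_of_mem_erase hx)
        have h2 := herasene x hx
        omega
      set P : Multiset ℕ := (L - 1) ::ₘ M.erase L with hP
      have hPsum : P.sum = n := by rw [hP, Multiset.sum_cons]; omega
      have hPpos : ∀ x ∈ P, 0 < x := by
        intro x hx
        rcases Multiset.mem_cons.1 hx with rfl | hx
        · omega
        · exact hpos x (Multiset.mem_of_mem_erase hx)
      refine ⟨⟨P, fun {i} hi => hPpos i hi, hPsum⟩, ?_, ?_⟩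
      · rw [Finset.mem_coe, Nat.Partition.odds, Nat.Partition.restricted, Finset.mem_filter]
        refine ⟨Finset.mem_univ _, ?_⟩
        intro i hi
        simp only at hi
        rcases Multiset.mem_cons.1 hi with rfl | hi
        · rw [← Nat.not_even_iff_odd.symm, Nat.odd_iff]
          rw [Nat.even_iff] at hLeven
          omega
        · exact Nat.not_even_iff_odd.symm.1 (heraseodd i hi)
      · have hPsup : P.sup = L - 1 := by
          rw [hP, Multiset.sup_cons]
          have : (M.erase L).sup ≤ L - 1 := Multiset.sup_le.2 heraselt
          omega
        rw [fmap]
        simp only [hPsup]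
        have : L - 1 + 1 = L := by omega
        rw [this, hP, Multiset.erase_cons_head, hcons]
  -- injectivity
  have hinj : Set.InjOn (fmap n) ((Nat.Partition.odds n : Finset (Nat.Partition n)) : Set _) := by
    intro p hp q hq heq
    have hsupf : ∀ r : Nat.Partition n, (fmap n r).sup = r.parts.sup + 1 := by
      intro r
      rw [fmap, Multiset.sup_cons]
      have : (r.parts.erase r.parts.sup).sup ≤ r.parts.sup :=
        Multiset.sup_le.2 fun b hb => Multiset.le_sup (Multiset.mem_of_mem_erase hb)
      omega
    have hsup : p.parts.sup = q.parts.sup := by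
      have := hsupf p
      rw [heq, hsupf q] at this
      omega
    have herase : p.parts.erase q.parts.sup = q.parts.erase q.parts.sup := by
      have h2 : (p.parts.sup + 1) ::ₘ p.parts.erase p.parts.sup
          = (q.parts.sup + 1) ::ₘ q.parts.erase q.parts.sup := heq
      rw [hsup] at h2
      exact (Multiset.cons_inj_right _).1 h2
    have hparts : p.parts = q.parts := by
      rw [← Multiset.cons_erase (sup_mem p), hsup, herase,
        Multiset.cons_erase (sup_mem q)]
    exact Nat.Partition.ext hparts
  have : Fcount (n + 1) = S.ncard := rfl
  rw [this, ← himg, Set.ncard_image_of_injOn hinj, Set.ncard_coe_finset]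
end

section
/- As formal power series in q, the sum over n ≥ 1 of q^{2n}·(∏_{j=1}^{n}(1+q^j))/(∏_{j=n+1}^{2n}(1-q^j)) equals the sum over n ≥ 1 of q^{2n}/(∏_{j=1}^{n}(1-q^{2j-1})). -/
open PowerSeries Finset

private lemma key_prod (n : ℕ) :
    (∏ j ∈ Icc 1 n, (1 + (X : PowerSeries ℚ) ^ j)) *
      (∏ j ∈ Icc 1 n, (1 - (X : PowerSeries ℚ) ^ (2 * j - 1))) *
      (∏ j ∈ Icc 1 n, (1 - (X : PowerSeries ℚ) ^ j)) =
    ∏ j ∈ Icc 1 (2 * n), (1 - (X : PowerSeries ℚ) ^ j) := by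
  induction n with
  | zero => simp
  | succ n ih =>
    have h1 : (2 : ℕ) * (n + 1) = 2 * n + 1 + 1 := by ring
    rw [Finset.prod_Icc_succ_top (by omega : 1 ≤ n + 1),
        Finset.prod_Icc_succ_top (by omega : 1 ≤ n + 1),
        Finset.prod_Icc_succ_top (by omega : 1 ≤ n + 1), h1,
        Finset.prod_Icc_succ_top (by omega : 1 ≤ 2 * n + 1 + 1),
        Finset.prod_Icc_succ_top (by omega : 1 ≤ 2 * n + 1), ← ih]
    simp only [Nat.add_sub_cancel]
    ring

private lemma cc_one {f : ℕ → PowerSeries ℚ} {s : Finset ℕ}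
    (h : ∀ j ∈ s, constantCoeff (R := ℚ) (f j) = 1) :
    constantCoeff (R := ℚ) (∏ j ∈ s, f j) = 1 := by
  rw [map_prod]
  exact Finset.prod_eq_one h

private lemma cc_Xpow {j : ℕ} (hj : 1 ≤ j) :
    (constantCoeff (R := ℚ)) ((X : PowerSeries ℚ) ^ j) = 0 := by
  rw [map_pow, constantCoeff_X, zero_pow (by omega : j ≠ 0)]

private lemma cc_sub (s : Finset ℕ) (_hs : ∀ j ∈ s, 1 ≤ j) (g : ℕ → ℕ)
    (hg : ∀ j ∈ s, 1 ≤ g j) :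
    constantCoeff (R := ℚ) (∏ j ∈ s, (1 - (X : PowerSeries ℚ) ^ (g j))) = 1 := by
  apply cc_one
  intro j hj
  rw [map_sub, map_one, cc_Xpow (hg j hj), sub_zero]

private lemma termwise (n : ℕ) (hn : 1 ≤ n) :
    (∏ j ∈ Icc 1 n, (1 + (X : PowerSeries ℚ) ^ j)) *
      (∏ j ∈ Icc (n + 1) (2 * n), (1 - (X : PowerSeries ℚ) ^ j))⁻¹ =
    (∏ j ∈ Icc 1 n, (1 - (X : PowerSeries ℚ) ^ (2 * j - 1)))⁻¹ := by
  set A := ∏ j ∈ Icc 1 n, (1 + (X : PowerSeries ℚ) ^ j) with hA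
  set B := ∏ j ∈ Icc (n + 1) (2 * n), (1 - (X : PowerSeries ℚ) ^ j) with hB
  set C := ∏ j ∈ Icc 1 n, (1 - (X : PowerSeries ℚ) ^ (2 * j - 1)) with hC
  set D := ∏ j ∈ Icc 1 n, (1 - (X : PowerSeries ℚ) ^ j) with hD
  have hBcc : constantCoeff (R := ℚ) B = 1 :=
    cc_sub _ (fun j hj => by simp only [mem_Icc] at hj; omega) id
      (fun j hj => by simp only [mem_Icc] at hj; show 1 ≤ j; omega)
  have hCcc : constantCoeff (R := ℚ) C = 1 :=
    cc_sub _ (fun j hj => by simp only [mem_Icc] at hj; omega) (fun j => 2 * j - 1)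
      (fun j hj => by simp only [mem_Icc] at hj; show 1 ≤ 2 * j - 1; omega)
  have hDB : D * B = ∏ j ∈ Icc 1 (2 * n), (1 - (X : PowerSeries ℚ) ^ j) := by
    rw [hD, hB, ← Finset.prod_union (by
      apply Finset.disjoint_left.2
      intro a ha hb
      simp only [mem_Icc] at ha hb
      omega)]
    congr 1
    ext a
    simp only [mem_union, mem_Icc]
    omega
  have hkey : A * C * D = ∏ j ∈ Icc 1 (2 * n), (1 - (X : PowerSeries ℚ) ^ j) :=
    key_prod n
  have hACB : A * C = B := by
    have hDcc : constantCoeff (R := ℚ) D = 1 :=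
      cc_sub _ (fun j hj => by simp only [mem_Icc] at hj; omega) id
        (fun j hj => by simp only [mem_Icc] at hj; show 1 ≤ j; omega)
    have hDne : D ≠ 0 := fun h => by simp [h] at hDcc
    have : A * C * D = B * D := by rw [hkey, ← hDB]; ring
    exact mul_right_cancel₀ hDne this
  have hBne : B ≠ 0 := fun h => by simp [h] at hBcc
  have hCne : C ≠ 0 := fun h => by simp [h] at hCcc
  have hBinv : B * B⁻¹ = 1 := PowerSeries.mul_inv_cancel _ (by rw [hBcc]; exact one_ne_zero)
  have hCinv : C * C⁻¹ = 1 := PowerSeries.mul_inv_cancel _ (by rw [hCcc]; exact one_ne_zero)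
  have hBCne : B * C ≠ 0 := mul_ne_zero hBne hCne
  apply mul_right_cancel₀ hBCne
  calc A * B⁻¹ * (B * C) = A * C * (B * B⁻¹) := by ring
    _ = B := by rw [hBinv, hACB, mul_one]
    _ = C⁻¹ * (B * C) := by rw [show C⁻¹ * (B * C) = B * (C * C⁻¹) by ring, hCinv, mul_one]

/-- As formal power series in `q`,
`∑_{n≥1} q^{2n} · ∏_{j=1}^n (1+q^j) / ∏_{j=n+1}^{2n} (1-q^j)
  = ∑_{n≥1} q^{2n} / ∏_{j=1}^n (1-q^{2j-1})`.
Each coefficient of either side receives contributions only from the summands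
with `n ≤ m`, so the identity is stated coefficientwise with the sums truncated
at `m` (a faithful rendering of the equality of formal power series). -/
theorem C_eq_F_gen :
    ∀ m : ℕ,
      (PowerSeries.coeff (R := ℚ) m)
        (∑ n ∈ Icc 1 m, (X : PowerSeries ℚ) ^ (2 * n) *
          (∏ j ∈ Icc 1 n, (1 + (X : PowerSeries ℚ) ^ j)) *
          (∏ j ∈ Icc (n + 1) (2 * n), (1 - (X : PowerSeries ℚ) ^ j))⁻¹) =
      (PowerSeries.coeff (R := ℚ) m)
        (∑ n ∈ Icc 1 m, (X : PowerSeries ℚ) ^ (2 * n) *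
          (∏ j ∈ Icc 1 n, (1 - (X : PowerSeries ℚ) ^ (2 * j - 1)))⁻¹) := by
  intro m
  congr 1
  apply Finset.sum_congr rfl
  intro n hn
  simp only [mem_Icc] at hn
  rw [mul_assoc, termwise n hn.1]
end

section
/- For every k ≥ 1 and N ≥ 0, the identity ∑_{n=0}^{N} q^{kn}/(-q;q)_n = ∑_{i=0}^{k-1} (-1)^{k-1+i} (q^{i+1};q)_{k-1-i} · (2 - q^{(N+1)i}/(-q;q)_N) holds as an identity of rational functions (equivalently, of formal power series) in q. -/
open PowerSeries Finset

private noncomputable def Pq (n : ℕ) : PowerSeries ℚ :=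
  ∏ j ∈ Icc 1 n, (1 + (X : PowerSeries ℚ) ^ j)

private lemma Pq_const (n : ℕ) : constantCoeff (Pq n) ≠ 0 := by
  have : constantCoeff (Pq n) = 1 := by
    unfold Pq
    rw [map_prod]
    apply Finset.prod_eq_one
    intro j hj
    have hj1 : 1 ≤ j := (Finset.mem_Icc.mp hj).1
    simp [constantCoeff_X, zero_pow (by omega : j ≠ 0)]
  simp [this]

private lemma Pq_zero : Pq 0 = 1 := by simp [Pq]

private lemma Pq_def (n : ℕ) :
    (∏ j ∈ Icc 1 n, (1 + (X : PowerSeries ℚ) ^ j)) = Pq n := rfl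

private lemma Pq_succ (n : ℕ) : Pq (n + 1) = Pq n * (1 + X ^ (n + 1)) := by
  unfold Pq
  rw [Finset.prod_Icc_succ_top (by omega)]

private lemma Pq_inv_mul (n : ℕ) : (Pq n)⁻¹ * Pq n = 1 :=
  PowerSeries.inv_mul_cancel _ (Pq_const n)

private lemma Pq_inv_succ (n : ℕ) :
    (Pq (n + 1))⁻¹ * (1 + X ^ (n + 1)) = (Pq n)⁻¹ := by
  have h1 := Pq_inv_mul (n + 1)
  have h0 := Pq_inv_mul n
  calc (Pq (n+1))⁻¹ * (1 + X ^ (n+1))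
      = ((Pq n)⁻¹ * Pq n) * ((Pq (n+1))⁻¹ * (1 + X ^ (n+1))) := by rw [h0]; ring
    _ = (Pq n)⁻¹ * ((Pq (n+1))⁻¹ * Pq (n+1)) := by rw [Pq_succ]; ring
    _ = (Pq n)⁻¹ := by rw [h1]; ring

private lemma Sone (N : ℕ) :
    ∑ n ∈ Finset.range (N + 1), (X : PowerSeries ℚ) ^ n * (Pq n)⁻¹
      = 2 - (Pq N)⁻¹ := by
  induction N with
  | zero => simp [Pq_zero]; ring
  | succ N ih =>
    rw [Finset.sum_range_succ, ih, ← Pq_inv_succ N]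
    ring

private lemma Srec (k N : ℕ) :
    ∑ n ∈ Finset.range (N + 1), (X : PowerSeries ℚ) ^ ((k+1) * n) * (Pq n)⁻¹
      = 2 - (1 - X ^ k) * ∑ n ∈ Finset.range (N + 1), (X : PowerSeries ℚ) ^ (k * n) * (Pq n)⁻¹
        - X ^ (k * (N + 1)) * (Pq N)⁻¹ := by
  induction N with
  | zero =>
    rw [Finset.sum_range_one, Finset.sum_range_one]
    simp only [Nat.mul_zero, pow_zero, Pq_zero, inv_one, Nat.mul_one, one_mul, mul_one]
    ring
  | succ N ih =>
    rw [Finset.sum_range_succ, Finset.sum_range_succ (f := fun n => (X : PowerSeries ℚ) ^ (k*n) * (Pq n)⁻¹),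
      ih, ← Pq_inv_succ N]
    ring

/-- Finite analogue: for `k ≥ 1` and `N ≥ 0`,
`∑_{n=0}^N q^{kn}/(-q;q)_n
  = ∑_{i=0}^{k-1} (-1)^{k-1+i} (q^{i+1};q)_{k-1-i} (2 - q^{(N+1)i}/(-q;q)_N)`,
where `(-q;q)_n = ∏_{j=1}^n (1+q^j)` and `(a;q)_m = ∏_{j=0}^{m-1} (1-a q^j)`.
The identity is stated in the field of fractions context of formal power series
over `ℚ`; the inverses `(-q;q)_n⁻¹` are genuine inverses since these series have
nonzero constant term. -/
theorem finite_analogue (k N : ℕ) (hk : 1 ≤ k) :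
    ∑ n ∈ Finset.range (N + 1), (X : PowerSeries ℚ) ^ (k * n) *
        (∏ j ∈ Icc 1 n, (1 + (X : PowerSeries ℚ) ^ j))⁻¹ =
      ∑ i ∈ Finset.range k, (-1 : PowerSeries ℚ) ^ (k - 1 + i) *
        (∏ j ∈ Finset.range (k - 1 - i), (1 - (X : PowerSeries ℚ) ^ (i + 1 + j))) *
        (2 - (X : PowerSeries ℚ) ^ ((N + 1) * i) *
          (∏ j ∈ Icc 1 N, (1 + (X : PowerSeries ℚ) ^ j))⁻¹) := by
  induction k, hk using Nat.le_induction with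
  | base =>
    simp only [show (1:ℕ) - 1 = 0 from rfl, Finset.sum_range_one, pow_zero,
      Finset.range_zero, Finset.prod_empty, Nat.mul_zero, one_mul, Pq_def]
    simpa using Sone N
  | succ k hk ih =>
    simp only [Pq_def] at ih ⊢
    rw [Srec k N, ih, Finset.sum_range_succ]
    have htop : (-1 : PowerSeries ℚ) ^ (k + 1 - 1 + k) *
        (∏ j ∈ Finset.range (k + 1 - 1 - k), (1 - (X : PowerSeries ℚ) ^ (k + 1 + j))) *
        (2 - (X : PowerSeries ℚ) ^ ((N + 1) * k) * (Pq N)⁻¹)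
        = 2 - X ^ ((N+1) * k) * (Pq N)⁻¹ := by
      simp only [Nat.add_sub_cancel, Nat.sub_self, Finset.range_zero, Finset.prod_empty,
        mul_one, one_mul]
      rw [show (-1 : PowerSeries ℚ) ^ (k + k) = 1 from Even.neg_one_pow ⟨k, rfl⟩]
      ring
    rw [htop]
    have hsum : ∑ i ∈ Finset.range k, (-1 : PowerSeries ℚ) ^ (k + 1 - 1 + i) *
        (∏ j ∈ Finset.range (k + 1 - 1 - i), (1 - (X : PowerSeries ℚ) ^ (i + 1 + j))) *
        (2 - (X : PowerSeries ℚ) ^ ((N + 1) * i) * (Pq N)⁻¹)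
        = -((1 - X ^ k) * ∑ i ∈ Finset.range k, (-1 : PowerSeries ℚ) ^ (k - 1 + i) *
        (∏ j ∈ Finset.range (k - 1 - i), (1 - (X : PowerSeries ℚ) ^ (i + 1 + j))) *
        (2 - (X : PowerSeries ℚ) ^ ((N + 1) * i) * (Pq N)⁻¹)) := by
      rw [Finset.mul_sum, ← Finset.sum_neg_distrib]
      apply Finset.sum_congr rfl
      intro i hi
      have hik : i < k := Finset.mem_range.mp hi
      simp only [Nat.add_sub_cancel]
      rw [show k - i = (k - 1 - i) + 1 from by omega, Finset.prod_range_succ,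
        show i + 1 + (k - 1 - i) = k from by omega,
        show (-1 : PowerSeries ℚ) ^ (k + i) = -(-1) ^ (k - 1 + i) from by
          rw [show k + i = (k - 1 + i) + 1 from by omega, pow_succ]; ring]
      ring
    rw [hsum, show k * (N+1) = (N+1) * k from by ring]
    ring
end

section
/- For every positive integer k, the formal power series identity ∑_{n=0}^{∞} q^{nk}·(-q^{n+1};q)_∞ = 2·(-q;q)_∞·∑_{j=0}^{k-1} (-1)^j (q^{k-j};q)_j + (-1)^k (q;q)_{k-1} holds. -/
open PowerSeries Finset

noncomputable def Gaux (m n : ℕ) : PowerSeries ℚ :=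
  ∏ i ∈ Icc (n + 1) m, (1 + (X : PowerSeries ℚ) ^ i)

noncomputable def Faux (m k : ℕ) : PowerSeries ℚ :=
  ∑ n ∈ Finset.range (m + 1), (X : PowerSeries ℚ) ^ (n * k) * Gaux m n

noncomputable def Aaux (k : ℕ) : PowerSeries ℚ :=
  ∑ j ∈ Finset.range k, (-1 : PowerSeries ℚ) ^ j *
    ∏ i ∈ Finset.range j, (1 - (X : PowerSeries ℚ) ^ (k - j + i))

noncomputable def Caux (k : ℕ) : PowerSeries ℚ :=
  ∏ i ∈ Icc 1 (k - 1), (1 - (X : PowerSeries ℚ) ^ i)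

noncomputable def Raux (m k : ℕ) : PowerSeries ℚ :=
  2 * Gaux m 0 * Aaux k + (-1 : PowerSeries ℚ) ^ k * Caux k

lemma Gaux_succ (m n : ℕ) (h1 : 1 ≤ n) (h2 : n ≤ m) :
    Gaux m (n - 1) = (1 + (X : PowerSeries ℚ) ^ n) * Gaux m n := by
  unfold Gaux
  rw [Nat.sub_add_cancel h1, ← Finset.Ico_add_one_right_eq_Icc, ← Finset.Ico_add_one_right_eq_Icc,
    Finset.prod_eq_prod_Ico_succ_bot (by omega)]

lemma Gaux_top (m : ℕ) : Gaux m m = 1 := by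
  unfold Gaux
  rw [Finset.Icc_eq_empty (by omega), Finset.prod_empty]

lemma Faux_rec (m k : ℕ) :
    Faux m (k + 1) = 2 * Gaux m 0 - Faux m k + X ^ k * Faux m k
      - (X : PowerSeries ℚ) ^ ((m + 1) * k) := by
  have key : ∀ n ∈ Icc 1 m,
      (X : PowerSeries ℚ) ^ (n * (k + 1)) * Gaux m n
        = X ^ (n * k) * Gaux m (n - 1) - X ^ (n * k) * Gaux m n := by
    intro n hn
    rw [Finset.mem_Icc] at hn
    rw [Gaux_succ m n hn.1 hn.2, Nat.mul_succ, pow_add]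
    ring
  have split : ∀ j : ℕ, Faux m j = Gaux m 0 +
      ∑ n ∈ Icc 1 m, (X : PowerSeries ℚ) ^ (n * j) * Gaux m n := by
    intro j
    unfold Faux
    rw [Finset.range_eq_Ico, Finset.sum_eq_sum_Ico_succ_bot (by omega),
      Finset.Ico_add_one_right_eq_Icc]
    simp
  have reindex : ∑ n ∈ Icc 1 m, (X : PowerSeries ℚ) ^ (n * k) * Gaux m (n - 1)
      = X ^ k * Faux m k - X ^ ((m + 1) * k) := by
    rw [← Finset.Ico_add_one_right_eq_Icc, Finset.sum_Ico_eq_sum_range, Nat.add_sub_cancel]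
    have h1 : ∀ i ∈ Finset.range (m),
        (X : PowerSeries ℚ) ^ ((1 + i) * k) * Gaux m (1 + i - 1)
          = X ^ k * ((X : PowerSeries ℚ) ^ (i * k) * Gaux m i) := by
      intro i _
      have e1 : 1 + i - 1 = i := by omega
      have e2 : (1 + i) * k = k + i * k := by ring
      rw [e1, e2, pow_add, mul_assoc]
    rw [Finset.sum_congr rfl h1, ← Finset.mul_sum]
    have h2 : Faux m k
        = (∑ i ∈ Finset.range (m), (X : PowerSeries ℚ) ^ (i * k) * Gaux m i)
          + X ^ (m * k) := by
      unfold Faux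
      rw [Finset.sum_range_succ, Gaux_top, mul_one]
    rw [h2]
    have e3 : (m + 1) * k = k + m * k := by ring
    rw [e3, pow_add]
    ring
  rw [split (k + 1), Finset.sum_congr rfl key, Finset.sum_sub_distrib, reindex,
    split k]
  ring

lemma Aaux_rec (k : ℕ) :
    Aaux (k + 1) = 1 + ((X : PowerSeries ℚ) ^ k - 1) * Aaux k := by
  unfold Aaux
  rw [Finset.sum_range_succ']
  have h : ∀ j ∈ Finset.range k,
      (-1 : PowerSeries ℚ) ^ (j + 1) *
        ∏ i ∈ Finset.range (j + 1), (1 - (X : PowerSeries ℚ) ^ (k + 1 - (j + 1) + i))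
      = ((X : PowerSeries ℚ) ^ k - 1) *
        ((-1 : PowerSeries ℚ) ^ j * ∏ i ∈ Finset.range j, (1 - (X : PowerSeries ℚ) ^ (k - j + i))) := by
    intro j hj
    rw [Finset.mem_range] at hj
    have e1 : k + 1 - (j + 1) = k - j := by omega
    have e2 : ∀ i, k + 1 - (j + 1) + i = k - j + i := fun i => by omega
    rw [Finset.prod_range_succ]
    have e3 : k - j + j = k := by omega
    simp only [e1, e3]
    rw [pow_succ]
    ring
  rw [Finset.sum_congr rfl h, ← Finset.mul_sum]
  simp [add_comm]

lemma Caux_rec (k : ℕ) (hk : 1 ≤ k) :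
    Caux (k + 1) = Caux k * (1 - (X : PowerSeries ℚ) ^ k) := by
  unfold Caux
  have e : k + 1 - 1 = (k - 1) + 1 := by omega
  rw [e, Finset.prod_Icc_succ_top (by omega)]
  have e2 : k - 1 + 1 = k := by omega
  rw [e2]

lemma Raux_rec (m k : ℕ) (hk : 1 ≤ k) :
    Raux m (k + 1) = 2 * Gaux m 0 - Raux m k + X ^ k * Raux m k := by
  unfold Raux
  rw [Aaux_rec, Caux_rec k hk, pow_succ]
  ring

lemma main_aux (m k : ℕ) (hk : 1 ≤ k) :
    ∀ d ≤ m, (PowerSeries.coeff (R := ℚ) d) (Faux m k) = (PowerSeries.coeff (R := ℚ) d) (Raux m k) := by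
  induction k, hk using Nat.le_induction with
  | base =>
    intro d _
    congr 1
    have h1 := Faux_rec m 0
    simp only [pow_zero, one_mul, Nat.mul_zero] at h1
    have h1' : Faux m 1 = 2 * Gaux m 0 - 1 := by rw [h1]; ring
    rw [h1']
    unfold Raux Aaux Caux
    simp
    ring
  | succ k hk ih =>
    intro d hd
    rw [Faux_rec m k, Raux_rec m k hk,
      mul_comm ((X : PowerSeries ℚ) ^ k) (Faux m k),
      mul_comm ((X : PowerSeries ℚ) ^ k) (Raux m k)]
    have hne : d ≠ (m + 1) * k := by
      have : m + 1 ≤ (m + 1) * k := Nat.le_mul_of_pos_right _ hk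
      omega
    simp only [map_sub, map_add, PowerSeries.coeff_mul_X_pow',
      PowerSeries.coeff_X_pow, if_neg hne, ih d hd]
    split_ifs with h
    · rw [ih (d - k) (le_trans (Nat.sub_le d k) hd)]
      ring
    · ring

/-- For `k ≥ 1`, as formal power series,
`∑_{n≥0} q^{nk}·(-q^{n+1};q)_∞ = 2(-q;q)_∞ ∑_{j=0}^{k-1} (-1)^j (q^{k-j};q)_j
  + (-1)^k (q;q)_{k-1}`.
The identity is stated coefficientwise: the coefficient of `q^m` is unaffected by
truncating the sum over `n` at `m` (the term `q^{nk}` has order `nk ≥ n`) and by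
truncating the infinite products `∏_{i>n}(1+q^i)` and `(-q;q)_∞` at the factor
`i = m` (omitted factors differ from `1` only in degrees `> m`). -/
theorem D_k_gen (k : ℕ) (hk : 1 ≤ k) :
    ∀ m : ℕ,
      (PowerSeries.coeff (R := ℚ) m)
        (∑ n ∈ Finset.range (m + 1), (X : PowerSeries ℚ) ^ (n * k) *
          ∏ i ∈ Icc (n + 1) m, (1 + (X : PowerSeries ℚ) ^ i)) =
      (PowerSeries.coeff (R := ℚ) m)
        (2 * (∏ i ∈ Icc 1 m, (1 + (X : PowerSeries ℚ) ^ i)) *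
            ∑ j ∈ Finset.range k, (-1 : PowerSeries ℚ) ^ j *
              ∏ i ∈ Finset.range j, (1 - (X : PowerSeries ℚ) ^ (k - j + i)) +
          (-1 : PowerSeries ℚ) ^ k *
            ∏ i ∈ Icc 1 (k - 1), (1 - (X : PowerSeries ℚ) ^ i)) := by
  intro m
  have h := main_aux m k hk m le_rfl
  unfold Faux Raux Gaux Aaux Caux at h
  simpa using h
end

section
/- For every positive integer k, the formal power series identity ∑_{n=0}^{∞} q^{nk}·(q^{n+1};q)_∞ = (q;q)_{k-1} holds, where (q^{n+1};q)_∞ = ∏_{i=n+1}^{∞}(1-q^i) and (q;q)_{k-1} = ∏_{i=1}^{k-1}(1-q^i). -/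
open PowerSeries Finset

noncomputable def fP (m n : ℕ) : PowerSeries ℚ :=
  ∏ i ∈ Icc (n + 1) m, (1 - (X : PowerSeries ℚ) ^ i)

noncomputable def SP (m k : ℕ) : PowerSeries ℚ :=
  ∑ n ∈ range (m + 1), (X : PowerSeries ℚ) ^ (n * k) * fP m n

lemma fP_last (m : ℕ) : fP m m = 1 := by
  unfold fP
  rw [Finset.Icc_eq_empty (by omega), Finset.prod_empty]

lemma fP_step {m n : ℕ} (h : n < m) :
    fP m n = (1 - (X : PowerSeries ℚ) ^ (n + 1)) * fP m (n + 1) := by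
  unfold fP
  rw [← Finset.Ico_add_one_right_eq_Icc, ← Finset.Ico_add_one_right_eq_Icc,
    Finset.prod_eq_prod_Ico_succ_bot (by omega)]

lemma SP_one (m : ℕ) : SP m 1 = 1 := by
  unfold SP
  rw [Finset.sum_range_succ']
  simp only [mul_one, pow_zero, one_mul]
  have : ∀ n ∈ range m, (X : PowerSeries ℚ) ^ (n + 1) * fP m (n + 1)
      = fP m (n + 1) - fP m n := by
    intro n hn
    rw [fP_step (Finset.mem_range.mp hn)]
    ring
  rw [Finset.sum_congr rfl this, Finset.sum_range_sub, fP_last]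
  ring

lemma SP_step (m k : ℕ) :
    SP m (k + 1) = (1 - (X : PowerSeries ℚ) ^ k) * SP m k
      + (X : PowerSeries ℚ) ^ ((m + 1) * k) := by
  have key : SP m k - SP m (k + 1)
      = (X : PowerSeries ℚ) ^ k * SP m k - (X : PowerSeries ℚ) ^ ((m + 1) * k) := by
    unfold SP
    rw [← Finset.sum_sub_distrib, Finset.mul_sum]
    have h1 : ∀ n ∈ range (m + 1),
        (X : PowerSeries ℚ) ^ (n * k) * fP m n - X ^ (n * (k + 1)) * fP m n
        = X ^ (n * k) * ((1 - X ^ n) * fP m n) := by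
      intro n _
      have : n * (k + 1) = n * k + n := by ring
      rw [this, pow_add]
      ring
    rw [Finset.sum_congr rfl h1, Finset.sum_range_succ']
    have h2 : ∀ n ∈ range m,
        (X : PowerSeries ℚ) ^ ((n + 1) * k) * ((1 - X ^ (n + 1)) * fP m (n + 1))
        = X ^ ((n + 1) * k) * fP m n := by
      intro n hn
      rw [← fP_step (Finset.mem_range.mp hn)]
    rw [Finset.sum_congr rfl h2]
    have h3 : ∀ n ∈ range (m + 1),
        (X : PowerSeries ℚ) ^ k * (X ^ (n * k) * fP m n)
        = X ^ ((n + 1) * k) * fP m n := by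
      intro n _
      rw [← mul_assoc, ← pow_add]
      congr 2
      ring
    rw [Finset.sum_congr rfl h3, Finset.sum_range_succ, fP_last, mul_one]
    simp
  linear_combination -key

lemma SP_main (m : ℕ) : ∀ k, 1 ≤ k → ∃ R : PowerSeries ℚ,
    SP m k = (∏ i ∈ Icc 1 (k - 1), (1 - (X : PowerSeries ℚ) ^ i))
      + (X : PowerSeries ℚ) ^ (m + 1) * R := by
  intro k
  induction k with
  | zero => omega
  | succ k ih =>
    intro _
    rcases Nat.eq_or_lt_of_le (Nat.one_le_iff_ne_zero.mpr (by omega) :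
        (1 : ℕ) ≤ k + 1) with h | h
    · refine ⟨0, ?_⟩
      have hk0 : k = 0 := by omega
      subst hk0
      rw [SP_one]
      simp
    · have hk : 1 ≤ k := by omega
      obtain ⟨j, rfl⟩ : ∃ j, k = j + 1 := ⟨k - 1, by omega⟩
      obtain ⟨R, hR⟩ := ih hk
      refine ⟨(1 - (X : PowerSeries ℚ) ^ (j + 1)) * R + X ^ ((m + 1) * j), ?_⟩
      rw [SP_step, hR]
      have hprod : (∏ i ∈ Icc 1 (j + 1 + 1 - 1), (1 - (X : PowerSeries ℚ) ^ i))
          = (∏ i ∈ Icc 1 (j + 1 - 1), (1 - (X : PowerSeries ℚ) ^ i))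
            * (1 - X ^ (j + 1)) := by
        have h1 : j + 1 + 1 - 1 = j + 1 := rfl
        have h2 : j + 1 - 1 = j := rfl
        rw [h1, h2, Finset.prod_Icc_succ_top (by omega)]
      have hpow : (X : PowerSeries ℚ) ^ ((m + 1) * (j + 1))
          = X ^ (m + 1) * X ^ ((m + 1) * j) := by
        rw [← pow_add]
        congr 1
        ring
      rw [hprod, hpow]
      ring

/-- For `k ≥ 1`, the formal power series identity
`∑_{n≥0} q^{nk}·(q^{n+1};q)_∞ = (q;q)_{k-1}` holds, where
`(q^{n+1};q)_∞ = ∏_{i=n+1}^∞ (1-q^i)` and `(q;q)_{k-1} = ∏_{i=1}^{k-1} (1-q^i)`.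
Stated coefficientwise: the coefficient of `q^m` is unaffected by truncating the
sum over `n` at `m` (the summand has order at least `nk ≥ n`) and the infinite
product at the factor `i = m` (omitted factors differ from `1` only in degrees
`> m`). -/
theorem D_gen_alternating (k : ℕ) (hk : 1 ≤ k) :
    ∀ m : ℕ,
      (PowerSeries.coeff (R := ℚ) m)
        (∑ n ∈ Finset.range (m + 1), (X : PowerSeries ℚ) ^ (n * k) *
          ∏ i ∈ Icc (n + 1) m, (1 - (X : PowerSeries ℚ) ^ i)) =
      (PowerSeries.coeff (R := ℚ) m)
        (∏ i ∈ Icc 1 (k - 1), (1 - (X : PowerSeries ℚ) ^ i)) := by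
  intro m
  obtain ⟨R, hR⟩ := SP_main m k hk
  have : (∑ n ∈ Finset.range (m + 1), (X : PowerSeries ℚ) ^ (n * k) *
      ∏ i ∈ Icc (n + 1) m, (1 - (X : PowerSeries ℚ) ^ i)) = SP m k := rfl
  rw [this, hR, map_add]
  have hz : (PowerSeries.coeff (R := ℚ) m) ((X : PowerSeries ℚ) ^ (m + 1) * R) = 0 :=
    PowerSeries.X_pow_dvd_iff.mp ⟨R, rfl⟩ m (lt_add_one m)
  rw [hz, add_zero]
end

section
/- Fix a positive integer k. For every n > k(k-1)/2, among the partitions of n into non-negative parts whose smallest part occurs exactly k times with all other parts distinct, the number of such partitions with an even number of parts strictly greater than the smallest part equals the number with an odd number of such parts. In particular, D_k(n) is even for all n > k(k-1)/2. -/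
/-- `DcountE k n`: those partitions counted by `Dcount k n` in which the number of
parts strictly greater than the smallest part is even. -/
noncomputable def DcountE (k n : ℕ) : ℕ :=
  Set.ncard {M : Multiset ℕ | M.sum = n ∧
    ∃ s ∈ M, (∀ x ∈ M, s ≤ x) ∧ M.count s = k ∧
      (∀ x ∈ M, x ≠ s → M.count x = 1) ∧
      Even (M.filter (fun x => s < x)).card}

/-- `DcountO k n`: those partitions counted by `Dcount k n` in which the number of
parts strictly greater than the smallest part is odd. -/
noncomputable def DcountO (k n : ℕ) : ℕ :=
  Set.ncard {M : Multiset ℕ | M.sum = n ∧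
    ∃ s ∈ M, (∀ x ∈ M, s ≤ x) ∧ M.count s = k ∧
      (∀ x ∈ M, x ≠ s → M.count x = 1) ∧
      Odd (M.filter (fun x => s < x)).card}

namespace DkProof


/-- sum of (· - 1) over a multiset of elements ≥ 1 -/
lemma sum_map_sub (c : ℕ) (m : Multiset ℕ) (h : ∀ x ∈ m, c ≤ x) :
    (m.map (· - c)).sum + c * Multiset.card m = m.sum := by
  induction m using Multiset.induction with
  | empty => simp
  | cons a s ih =>
    simp only [Multiset.map_cons, Multiset.sum_cons, Multiset.card_cons]
    have ha : c ≤ a := h a (Multiset.mem_cons_self a s)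
    have := ih (fun x hx => h x (Multiset.mem_cons_of_mem hx))
    rw [Nat.mul_succ]
    omega

lemma sum_map_add (c : ℕ) (m : Multiset ℕ) :
    (m.map (· + c)).sum = m.sum + c * Multiset.card m := by
  induction m using Multiset.induction with
  | empty => simp
  | cons a s ih =>
    simp only [Multiset.map_cons, Multiset.sum_cons, Multiset.card_cons]
    rw [Nat.mul_succ]
    omega

lemma card_le_sum (m : Multiset ℕ) (h : ∀ x ∈ m, 0 < x) : Multiset.card m ≤ m.sum := by
  induction m using Multiset.induction with
  | empty => simp
  | cons a s ih =>
    simp only [Multiset.card_cons, Multiset.sum_cons]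
    have := h a (Multiset.mem_cons_self a s)
    have := ih (fun x hx => h x (Multiset.mem_cons_of_mem hx))
    omega

/-- add a column of height `v` -/
def addCol (v : ℕ) (π : Multiset ℕ) : Multiset ℕ :=
  π.map (· + 1) + Multiset.replicate (v - Multiset.card π) 1

/-- delete the first column -/
def delCol (π : Multiset ℕ) : Multiset ℕ := (π.filter (2 ≤ ·)).map (· - 1)

lemma addCol_pos (v : ℕ) (π : Multiset ℕ) : ∀ x ∈ addCol v π, 0 < x := by
  intro x hx
  rcases Multiset.mem_add.1 hx with h | h
  · rcases Multiset.mem_map.1 h with ⟨y, _, rfl⟩; omega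
  · rw [Multiset.eq_of_mem_replicate h]; omega

lemma addCol_card (v : ℕ) (π : Multiset ℕ) (h : Multiset.card π ≤ v) :
    Multiset.card (addCol v π) = v := by
  simp [addCol]; omega

lemma addCol_sum (v : ℕ) (π : Multiset ℕ) (h : Multiset.card π ≤ v) :
    (addCol v π).sum = π.sum + v := by
  simp only [addCol, Multiset.sum_add, sum_map_add, Multiset.sum_replicate, smul_eq_mul]
  omega

lemma delCol_pos (π : Multiset ℕ) : ∀ x ∈ delCol π, 0 < x := by
  intro x hx
  rcases Multiset.mem_map.1 hx with ⟨y, hy, rfl⟩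
  have := (Multiset.mem_filter.1 hy).2
  omega

lemma delCol_card_le (π : Multiset ℕ) : Multiset.card (delCol π) ≤ Multiset.card π := by
  simp only [delCol, Multiset.card_map]
  exact Multiset.card_le_card (Multiset.filter_le _ _)

lemma delCol_sum (π : Multiset ℕ) (h : ∀ x ∈ π, 0 < x) :
    (delCol π).sum + Multiset.card π = π.sum := by
  have hsplit := Multiset.filter_add_not (2 ≤ ·) π
  have h1 : Multiset.filter (fun a => ¬ 2 ≤ a) π = Multiset.replicate
      (Multiset.card (Multiset.filter (fun a => ¬ 2 ≤ a) π)) 1 := by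
    rw [Multiset.eq_replicate]
    refine ⟨rfl, fun b hb => ?_⟩
    have := (Multiset.mem_filter.1 hb).2
    have := h b (Multiset.mem_filter.1 hb).1
    omega
  have hsum := congrArg Multiset.sum hsplit
  have hcard := congrArg (Multiset.card) hsplit
  rw [Multiset.sum_add] at hsum
  rw [Multiset.card_add] at hcard
  have h2 : (Multiset.filter (fun a => ¬ 2 ≤ a) π).sum
      = Multiset.card (Multiset.filter (fun a => ¬ 2 ≤ a) π) := by
    conv_lhs => rw [h1]
    simp [Multiset.sum_replicate]
  have h3 := sum_map_sub 1 (π.filter (2 ≤ ·)) (fun x hx => by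
    have := (Multiset.mem_filter.1 hx).2; omega)
  simp only [delCol]
  omega

lemma delCol_addCol (v : ℕ) (π : Multiset ℕ) (hpos : ∀ x ∈ π, 0 < x) :
    delCol (addCol v π) = π := by
  simp only [delCol, addCol, Multiset.filter_add]
  have h1 : Multiset.filter (2 ≤ ·) (π.map (· + 1)) = π.map (· + 1) := by
    rw [Multiset.filter_eq_self]
    intro x hx
    rcases Multiset.mem_map.1 hx with ⟨y, hy, rfl⟩
    have := hpos y hy; omega
  have h2 : Multiset.filter (2 ≤ ·) (Multiset.replicate (v - Multiset.card π) 1) = 0 := by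
    rw [Multiset.filter_eq_nil]
    intro x hx
    rw [Multiset.eq_of_mem_replicate hx]
    omega
  rw [h1, h2, add_zero, Multiset.map_map]
  rw [show ((· - 1) ∘ (· + 1) : ℕ → ℕ) = id from funext fun x => by simp]
  exact Multiset.map_id π

lemma addCol_delCol (π : Multiset ℕ) (hpos : ∀ x ∈ π, 0 < x) :
    addCol (Multiset.card π) (delCol π) = π := by
  simp only [addCol, delCol, Multiset.map_map, Multiset.card_map]
  have h1 : Multiset.map ((· + 1) ∘ (· - 1)) (Multiset.filter (2 ≤ ·) π)
      = Multiset.filter (2 ≤ ·) π := by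
    rw [show Multiset.map ((· + 1) ∘ (· - 1)) (Multiset.filter (2 ≤ ·) π)
        = Multiset.map id (Multiset.filter (2 ≤ ·) π) from
      Multiset.map_congr rfl (fun x hx => by
        have := (Multiset.mem_filter.1 hx).2
        simp only [Function.comp_apply, id_eq]; omega)]
    exact Multiset.map_id _
  rw [h1]
  have h2 : Multiset.replicate
      (Multiset.card π - Multiset.card (Multiset.filter (2 ≤ ·) π)) 1
      = Multiset.filter (fun a => ¬ 2 ≤ a) π := by
    symm
    rw [Multiset.eq_replicate]
    constructor
    · have := congrArg Multiset.card (Multiset.filter_add_not (2 ≤ ·) π)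
      rw [Multiset.card_add] at this
      omega
    · intro b hb
      have := (Multiset.mem_filter.1 hb).2
      have := hpos b (Multiset.mem_filter.1 hb).1
      omega
  rw [h2, Multiset.filter_add_not]


lemma even_pred {c : ℕ} (h : 0 < c) : Even (c - 1) ↔ ¬ Even c := by
  obtain ⟨d, rfl⟩ : ∃ d, c = d + 1 := ⟨c - 1, by omega⟩
  simp [Nat.even_add_one]

/-- maximum of a finset of naturals, 0 for empty -/
def fmax (A : Finset ℕ) : ℕ := WithBot.unbotD 0 A.max

lemma fmax_mem {A : Finset ℕ} (h : A.Nonempty) : fmax A ∈ A := by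
  rw [fmax, ← Finset.coe_max' h, WithBot.unbotD_coe]
  exact A.max'_mem h

lemma le_fmax {A : Finset ℕ} (h : A.Nonempty) {a : ℕ} (ha : a ∈ A) : a ≤ fmax A := by
  rw [fmax, ← Finset.coe_max' h, WithBot.unbotD_coe]
  exact A.le_max' a ha

/-- the combined type: left = (s, A, π); right = (B, ρ) -/
abbrev Elt : Type := (ℕ × Finset ℕ × Multiset ℕ) ⊕ (Finset ℕ × Multiset ℕ)

def valid (k : ℕ) : Elt → Prop
  | .inl x => (∀ a ∈ x.2.1, x.1 < a) ∧ (∀ y ∈ x.2.2, 0 < y)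
  | .inr x => (∀ b ∈ x.1, 0 < b ∧ b < k) ∧ (∀ y ∈ x.2, 0 < y)

def wt (k : ℕ) : Elt → ℕ
  | .inl x => k * x.1 + (∑ a ∈ x.2.1, a) + x.2.2.sum
  | .inr x => (∑ b ∈ x.1, b) + x.2.sum

def sgn : Elt → Prop
  | .inl x => Even x.2.1.card
  | .inr x => ¬ Even x.1.card

noncomputable def Th (k : ℕ) : Elt → Elt
  | .inl x =>
    if x.2.1.Nonempty ∧ Multiset.card x.2.2 ≤ fmax x.2.1 then
      .inl (x.1, x.2.1.erase (fmax x.2.1), addCol (fmax x.2.1) x.2.2)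
    else if x.1 < Multiset.card x.2.2 then
      .inl (x.1, insert (Multiset.card x.2.2) x.2.1, delCol x.2.2)
    else
      .inr (∅, x.2.2.map (· + k) + Multiset.replicate (x.1 - Multiset.card x.2.2) k)
  | .inr x =>
    if h : (x.1 ∪ (x.2.filter (· < k)).toFinset).Nonempty then
      if (x.1 ∪ (x.2.filter (· < k)).toFinset).min' h ∈ x.1 then
        .inr (x.1.erase ((x.1 ∪ (x.2.filter (· < k)).toFinset).min' h),
              ((x.1 ∪ (x.2.filter (· < k)).toFinset).min' h) ::ₘ x.2)
      else
        .inr (insert ((x.1 ∪ (x.2.filter (· < k)).toFinset).min' h) x.1,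
              x.2.erase ((x.1 ∪ (x.2.filter (· < k)).toFinset).min' h))
    else .inl (Multiset.card x.2, ∅, (x.2.filter (k < ·)).map (· - k))

theorem Th_spec (k : ℕ) (hk : 0 < k) (x : Elt) (hv : valid k x) :
    valid k (Th k x) ∧ wt k (Th k x) = wt k x ∧ (sgn (Th k x) ↔ ¬ sgn x)
      ∧ Th k (Th k x) = x := by
  classical
  rcases x with ⟨s, A, π⟩ | ⟨B, ρ⟩
  · obtain ⟨hA, hπ⟩ := hv
    simp only [valid] at hA hπ ⊢
    by_cases hcond : A.Nonempty ∧ Multiset.card π ≤ fmax A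
    · -- rule 1 : remove max of A as a new column of π
      obtain ⟨hne, hcv⟩ := hcond
      set v := fmax A with hv_def
      have hvA : v ∈ A := fmax_mem hne
      have hle_v : ∀ a ∈ A, a ≤ v := fun a ha => le_fmax hne ha
      have hTh : Th k (.inl (s, A, π)) = .inl (s, A.erase v, addCol v π) := by
        simp only [Th]
        exact if_pos (show A.Nonempty ∧ Multiset.card π ≤ fmax A from ⟨hne, hcv⟩)
      rw [hTh]
      have hAe : ∀ a ∈ A.erase v, a < v := fun a ha =>
        lt_of_le_of_ne (hle_v a (Finset.mem_of_mem_erase ha)) (Finset.ne_of_mem_erase ha)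
      refine ⟨⟨fun a ha => hA a (Finset.mem_of_mem_erase ha), addCol_pos v π⟩, ?_, ?_, ?_⟩
      · show k * s + (∑ a ∈ A.erase v, a) + (addCol v π).sum = k * s + (∑ a ∈ A, a) + π.sum
        have h1 := Finset.sum_erase_add A id hvA
        have h2 := addCol_sum v π hcv
        simp only [id] at h1
        omega
      · show Even (A.erase v).card ↔ ¬ Even A.card
        rw [Finset.card_erase_of_mem hvA]
        exact even_pred (Finset.card_pos.2 ⟨v, hvA⟩)
      · have hcard : Multiset.card (addCol v π) = v := addCol_card v π hcv
        have hncond : ¬ ((A.erase v).Nonempty ∧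
            Multiset.card (addCol v π) ≤ fmax (A.erase v)) := by
          rintro ⟨hne2, hle2⟩
          rw [hcard] at hle2
          exact absurd (hAe _ (fmax_mem hne2)) (by omega)
        have hsv : s < Multiset.card (addCol v π) := by rw [hcard]; exact hA v hvA
        simp only [Th, if_neg hncond, if_pos hsv]
        rw [hcard, Finset.insert_erase hvA, delCol_addCol v π hπ]
    · -- ¬ rule 1
      have hlt : ∀ a ∈ A, a < Multiset.card π := by
        intro a ha
        by_contra hc
        exact hcond ⟨⟨a, ha⟩, le_trans (by omega) (le_fmax ⟨a, ha⟩ ha)⟩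
      by_cases hs : s < Multiset.card π
      · -- rule 2
        have htA : Multiset.card π ∉ A := fun hc => absurd (hlt _ hc) (by omega)
        have hTh : Th k (.inl (s, A, π)) =
            .inl (s, insert (Multiset.card π) A, delCol π) := by
          simp only [Th, if_neg hcond, if_pos hs]
        rw [hTh]
        refine ⟨⟨?_, delCol_pos π⟩, ?_, ?_, ?_⟩
        · intro a ha
          rcases Finset.mem_insert.1 ha with rfl | ha'
          · exact hs
          · exact hA a ha'
        · show k * s + (∑ a ∈ insert (Multiset.card π) A, a) + (delCol π).sum
            = k * s + (∑ a ∈ A, a) + π.sum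
          rw [Finset.sum_insert htA]
          have := delCol_sum π hπ
          omega
        · show Even (insert (Multiset.card π) A).card ↔ ¬ Even A.card
          rw [Finset.card_insert_of_notMem htA]
          exact Nat.even_add_one
        · have hins : (insert (Multiset.card π) A).Nonempty := ⟨_, Finset.mem_insert_self _ _⟩
          have hfm : fmax (insert (Multiset.card π) A) = Multiset.card π := by
            have h1 := fmax_mem hins
            have h2 := le_fmax hins (Finset.mem_insert_self (Multiset.card π) A)
            rcases Finset.mem_insert.1 h1 with h3 | h3
            · exact h3
            · exact absurd (hlt _ h3) (by omega)
          have hcond2 : (insert (Multiset.card π) A).Nonempty ∧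
              Multiset.card (delCol π) ≤ fmax (insert (Multiset.card π) A) := by
            exact ⟨hins, by rw [hfm]; exact delCol_card_le π⟩
          simp only [Th, if_pos hcond2]
          rw [hfm, Finset.erase_insert htA, addCol_delCol π hπ]
      · -- rule 3 : cross to the right side
        have hAempty : A = ∅ := by
          rcases Finset.eq_empty_or_nonempty A with h | ⟨a, ha⟩
          · exact h
          · exact absurd (lt_trans (hA a ha) (hlt a ha)) hs
        subst hAempty
        have hTh : Th k (.inl (s, (∅ : Finset ℕ), π)) =
            .inr (∅, π.map (· + k) + Multiset.replicate (s - Multiset.card π) k) := by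
          simp only [Th, if_neg hcond, if_neg hs]
        rw [hTh]
        have hρpos : ∀ y ∈ π.map (· + k) + Multiset.replicate (s - Multiset.card π) k,
            0 < y := by
          intro y hy
          rcases Multiset.mem_add.1 hy with h | h
          · rcases Multiset.mem_map.1 h with ⟨z, _, rfl⟩; omega
          · rw [Multiset.eq_of_mem_replicate h]; omega
        refine ⟨⟨by simp, hρpos⟩, ?_, ?_, ?_⟩
        · show (∑ b ∈ (∅ : Finset ℕ), b) +
              (π.map (· + k) + Multiset.replicate (s - Multiset.card π) k).sum
            = k * s + (∑ a ∈ (∅ : Finset ℕ), a) + π.sum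
          rw [Finset.sum_empty, Multiset.sum_add, sum_map_add, Multiset.sum_replicate,
            smul_eq_mul]
          have hcs : Multiset.card π ≤ s := by omega
          have h1 : (s - Multiset.card π) * k = s * k - Multiset.card π * k :=
            Nat.sub_mul _ _ _
          have h2 : Multiset.card π * k ≤ s * k := Nat.mul_le_mul_right _ hcs
          have h3 : k * s = s * k := mul_comm _ _
          have h4 : k * Multiset.card π = Multiset.card π * k := mul_comm _ _
          omega
        · simp [sgn]
        · have hfilt : (π.map (· + k) + Multiset.replicate (s - Multiset.card π) k).filter
              (· < k) = 0 := by
            rw [Multiset.filter_eq_nil]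
            intro y hy
            rcases Multiset.mem_add.1 hy with h | h
            · rcases Multiset.mem_map.1 h with ⟨z, _, rfl⟩; omega
            · rw [Multiset.eq_of_mem_replicate h]; omega
          have hnW : ¬ ((∅ : Finset ℕ) ∪ (((π.map (· + k) +
              Multiset.replicate (s - Multiset.card π) k).filter (· < k)).toFinset)).Nonempty := by
            rw [hfilt]; simp
          simp only [Th, dif_neg hnW]
          have hfilt2 : (π.map (· + k) + Multiset.replicate (s - Multiset.card π) k).filter
              (k < ·) = π.map (· + k) := by
            rw [Multiset.filter_add]
            have h1 : (π.map (· + k)).filter (k < ·) = π.map (· + k) := by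
              rw [Multiset.filter_eq_self]
              intro y hy
              rcases Multiset.mem_map.1 hy with ⟨z, hz, rfl⟩
              have := hπ z hz; omega
            have h2 : (Multiset.replicate (s - Multiset.card π) k).filter (k < ·) = 0 := by
              rw [Multiset.filter_eq_nil]
              intro y hy
              rw [Multiset.eq_of_mem_replicate hy]; omega
            rw [h1, h2, add_zero]
          rw [hfilt2]
          have hcard2 : Multiset.card (π.map (· + k) +
              Multiset.replicate (s - Multiset.card π) k) = s := by
            simp; omega
          have hmapmap : (π.map (· + k)).map (· - k) = π := by
            rw [Multiset.map_map]
            rw [show ((· - k) ∘ (· + k) : ℕ → ℕ) = id from funext fun z => by simp]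
            exact Multiset.map_id π
          rw [hcard2, hmapmap]
  · -- right side
    obtain ⟨hB, hρ⟩ := hv
    simp only [valid] at hB hρ ⊢
    by_cases h : (B ∪ (ρ.filter (· < k)).toFinset).Nonempty
    · have hvW := (B ∪ (ρ.filter (· < k)).toFinset).min'_mem h
      set v := (B ∪ (ρ.filter (· < k)).toFinset).min' h with hv_def
      have hvWcases : v ∈ B ∨ (v ∈ ρ ∧ v < k) := by
        rcases Finset.mem_union.1 hvW with h1 | h1
        · exact Or.inl h1
        · right
          have h2 := Multiset.mem_toFinset.1 h1
          exact ⟨(Multiset.mem_filter.1 h2).1, (Multiset.mem_filter.1 h2).2⟩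
      have hvpos : 0 < v ∧ v < k := by
        rcases hvWcases with h1 | h1
        · exact hB v h1
        · exact ⟨hρ v h1.1, h1.2⟩
      by_cases hvB : v ∈ B
      · have hTh : Th k (.inr (B, ρ)) = .inr (B.erase v, v ::ₘ ρ) := by
          simp only [Th, dif_pos h, if_pos (hv_def ▸ hvB)]
          rfl
        rw [hTh]
        refine ⟨⟨fun b hb => hB b (Finset.mem_of_mem_erase hb), ?_⟩, ?_, ?_, ?_⟩
        · intro y hy
          rcases Multiset.mem_cons.1 hy with rfl | hy'
          · exact hvpos.1
          · exact hρ y hy'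
        · show (∑ b ∈ B.erase v, b) + (v ::ₘ ρ).sum = (∑ b ∈ B, b) + ρ.sum
          have h1 := Finset.sum_erase_add B id hvB
          simp only [id] at h1
          rw [Multiset.sum_cons]
          omega
        · show ¬ Even (B.erase v).card ↔ ¬ ¬ Even B.card
          rw [Finset.card_erase_of_mem hvB, not_not,
            even_pred (Finset.card_pos.2 ⟨v, hvB⟩)]
          tauto
        · -- back
          have hfc : (v ::ₘ ρ).filter (· < k) = v ::ₘ ρ.filter (· < k) :=
            Multiset.filter_cons_of_pos _ hvpos.2
          have hWeq : (B.erase v) ∪ ((v ::ₘ ρ).filter (· < k)).toFinset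
              = B ∪ (ρ.filter (· < k)).toFinset := by
            rw [hfc, Multiset.toFinset_cons, Finset.union_insert, ← Finset.insert_union,
              Finset.insert_erase hvB]
          have h2 : ((B.erase v) ∪ ((v ::ₘ ρ).filter (· < k)).toFinset).Nonempty := by
            rw [hWeq]; exact h
          have hmin2 : ((B.erase v) ∪ ((v ::ₘ ρ).filter (· < k)).toFinset).min' h2 = v := by
            congr 1 <;> rw [hWeq]
          have hnotmem : ¬ (((B.erase v) ∪ ((v ::ₘ ρ).filter (· < k)).toFinset).min' h2
              ∈ B.erase v) := by
            rw [hmin2]; exact Finset.notMem_erase v B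
          simp only [Th, dif_pos h2, if_neg hnotmem]
          rw [hmin2, Finset.insert_erase hvB, Multiset.erase_cons_head]
      · -- v comes from ρ
        have hvρ : v ∈ ρ ∧ v < k := by
          rcases hvWcases with h1 | h1
          · exact absurd h1 hvB
          · exact h1
        have hTh : Th k (.inr (B, ρ)) = .inr (insert v B, ρ.erase v) := by
          simp only [Th, dif_pos h, if_neg (hv_def ▸ hvB)]
          rfl
        rw [hTh]
        refine ⟨⟨?_, fun y hy => hρ y (Multiset.mem_of_mem_erase hy)⟩, ?_, ?_, ?_⟩
        · intro b hb
          rcases Finset.mem_insert.1 hb with rfl | hb'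
          · exact hvpos
          · exact hB b hb'
        · show (∑ b ∈ insert v B, b) + (ρ.erase v).sum = (∑ b ∈ B, b) + ρ.sum
          rw [Finset.sum_insert hvB]
          have h1 : v + (ρ.erase v).sum = ρ.sum := by
            conv_rhs => rw [← Multiset.cons_erase hvρ.1]
            rw [Multiset.sum_cons]
          omega
        · show ¬ Even (insert v B).card ↔ ¬ ¬ Even B.card
          rw [Finset.card_insert_of_notMem hvB, Nat.even_add_one]
        · -- back
          have hWeq : (insert v B) ∪ ((ρ.erase v).filter (· < k)).toFinset
              = B ∪ (ρ.filter (· < k)).toFinset := by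
            ext y
            simp only [Finset.mem_union, Finset.mem_insert, Multiset.mem_toFinset,
              Multiset.mem_filter]
            by_cases hy : y = v
            · subst hy
              simp [hvρ.1, hvρ.2]
            · constructor
              · rintro (⟨h1 | h1⟩ | ⟨h1, h2⟩)
                · exact absurd h1 hy
                · exact Or.inl h1
                · exact Or.inr ⟨(Multiset.mem_erase_of_ne hy).1 h1, h2⟩
              · rintro (h1 | ⟨h1, h2⟩)
                · exact Or.inl (Or.inr h1)
                · exact Or.inr ⟨(Multiset.mem_erase_of_ne hy).2 h1, h2⟩
          have h2 : ((insert v B) ∪ ((ρ.erase v).filter (· < k)).toFinset).Nonempty := by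
            rw [hWeq]; exact h
          have hmin2 : ((insert v B) ∪ ((ρ.erase v).filter (· < k)).toFinset).min' h2 = v := by
            congr 1 <;> rw [hWeq]
          have hmem : ((insert v B) ∪ ((ρ.erase v).filter (· < k)).toFinset).min' h2
              ∈ insert v B := by
            rw [hmin2]; exact Finset.mem_insert_self v B
          simp only [Th, dif_pos h2, if_pos hmem]
          rw [hmin2, Finset.erase_insert hvB, Multiset.cons_erase hvρ.1]
    · -- cross back to the left
      have hBempty : B = ∅ := by
        rcases Finset.eq_empty_or_nonempty B with h1 | h1
        · exact h1
        · exact absurd (h1.mono Finset.subset_union_left) h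
      subst hBempty
      have hρk : ∀ y ∈ ρ, k ≤ y := by
        intro y hy
        by_contra hc
        exact h ⟨y, Finset.mem_union_right _ (Multiset.mem_toFinset.2
          (Multiset.mem_filter.2 ⟨hy, by omega⟩))⟩
      have hTh : Th k (.inr ((∅ : Finset ℕ), ρ)) =
          .inl (Multiset.card ρ, ∅, (ρ.filter (k < ·)).map (· - k)) := by
        simp only [Th, dif_neg h]
      rw [hTh]
      have hπpos : ∀ y ∈ (ρ.filter (k < ·)).map (· - k), 0 < y := by
        intro y hy
        rcases Multiset.mem_map.1 hy with ⟨z, hz, rfl⟩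
        have := (Multiset.mem_filter.1 hz).2
        omega
      have hsplit := Multiset.filter_add_not (k < ·) ρ
      have hrep : ρ.filter (fun y => ¬ k < y) =
          Multiset.replicate (Multiset.card (ρ.filter (fun y => ¬ k < y))) k := by
        rw [Multiset.eq_replicate]
        refine ⟨rfl, fun b hb => ?_⟩
        have h1 := (Multiset.mem_filter.1 hb).2
        have h2 := hρk b (Multiset.mem_filter.1 hb).1
        omega
      have hcards : Multiset.card (ρ.filter (k < ·)) +
          Multiset.card (ρ.filter (fun y => ¬ k < y)) = Multiset.card ρ := by
        rw [← Multiset.card_add, hsplit]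
      refine ⟨⟨by simp, hπpos⟩, ?_, ?_, ?_⟩
      · show k * Multiset.card ρ + (∑ a ∈ (∅ : Finset ℕ), a)
            + ((ρ.filter (k < ·)).map (· - k)).sum
          = (∑ b ∈ (∅ : Finset ℕ), b) + ρ.sum
        have h1 := sum_map_sub k (ρ.filter (k < ·)) (fun y hy => by
          have := (Multiset.mem_filter.1 hy).2; omega)
        have h2 : (ρ.filter (k < ·)).sum + (ρ.filter (fun y => ¬ k < y)).sum = ρ.sum := by
          rw [← Multiset.sum_add, hsplit]
        have h3 : (ρ.filter (fun y => ¬ k < y)).sum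
            = k * Multiset.card (ρ.filter (fun y => ¬ k < y)) := by
          conv_lhs => rw [hrep]
          rw [Multiset.sum_replicate, smul_eq_mul, mul_comm]
        rw [← hcards, Nat.mul_add]
        omega
      · show Even (Finset.card (∅ : Finset ℕ)) ↔ ¬ ¬ Even (Finset.card (∅ : Finset ℕ))
        simp
      · -- back
        have hncond : ¬ ( (∅ : Finset ℕ).Nonempty ∧
            Multiset.card ((ρ.filter (k < ·)).map (· - k)) ≤ fmax (∅ : Finset ℕ)) := by
          rintro ⟨⟨a, ha⟩, -⟩
          exact absurd ha (Finset.notMem_empty a)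
        have hcle : Multiset.card ((ρ.filter (k < ·)).map (· - k)) ≤ Multiset.card ρ := by
          rw [Multiset.card_map]
          exact Multiset.card_le_card (Multiset.filter_le _ _)
        have hns : ¬ (Multiset.card ρ < Multiset.card ((ρ.filter (k < ·)).map (· - k))) := by
          omega
        simp only [Th, if_neg hncond, if_neg hns]
        have hmm : (((ρ.filter (k < ·)).map (· - k)).map (· + k)) = ρ.filter (k < ·) := by
          rw [Multiset.map_map]
          rw [show Multiset.map ((· + k) ∘ (· - k)) (ρ.filter (k < ·))
              = Multiset.map id (ρ.filter (k < ·)) from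
            Multiset.map_congr rfl (fun y hy => by
              have := (Multiset.mem_filter.1 hy).2
              simp only [Function.comp_apply, id_eq]; omega)]
          exact Multiset.map_id _
        have hrepc : Multiset.replicate (Multiset.card ρ -
            Multiset.card ((ρ.filter (k < ·)).map (· - k))) k
            = ρ.filter (fun y => ¬ k < y) := by
          rw [Multiset.card_map]
          rw [show Multiset.card ρ - Multiset.card (ρ.filter (k < ·))
              = Multiset.card (ρ.filter (fun y => ¬ k < y)) from by omega]
          exact hrep.symm
        rw [hmm, hrepc, hsplit]

/-! ### counting sets -/

/-- partitions of `m` (multisets of positive integers with sum `m`) -/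
def Part (m : ℕ) : Set (Multiset ℕ) := {π | (∀ y ∈ π, 0 < y) ∧ π.sum = m}

noncomputable def pp (m : ℕ) : ℕ := (Part m).ncard

/-- configurations of weight `n`, even/odd number of large parts -/
def Cfg (k n : ℕ) : Set (ℕ × Finset ℕ) :=
  {c | (∀ a ∈ c.2, c.1 < a) ∧ k * c.1 + (∑ a ∈ c.2, a) = n}
def CfgE (k n : ℕ) : Set (ℕ × Finset ℕ) := {c ∈ Cfg k n | Even c.2.card}
def CfgO (k n : ℕ) : Set (ℕ × Finset ℕ) := {c ∈ Cfg k n | ¬ Even c.2.card}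

/-- subsets of `{1, …, k-1}` with sum `n` -/
def Bst (k n : ℕ) : Set (Finset ℕ) := {B | (∀ b ∈ B, 0 < b ∧ b < k) ∧ (∑ b ∈ B, b) = n}
def BstE (k n : ℕ) : Set (Finset ℕ) := {B ∈ Bst k n | Even B.card}
def BstO (k n : ℕ) : Set (Finset ℕ) := {B ∈ Bst k n | ¬ Even B.card}

/-- the left / right weighted sets -/
def LL (k N : ℕ) : Set (ℕ × Finset ℕ × Multiset ℕ) :=
  {x | (∀ a ∈ x.2.1, x.1 < a) ∧ (∀ y ∈ x.2.2, 0 < y)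
    ∧ k * x.1 + (∑ a ∈ x.2.1, a) + x.2.2.sum = N}
def LLE (k N : ℕ) : Set (ℕ × Finset ℕ × Multiset ℕ) := {x ∈ LL k N | Even x.2.1.card}
def LLO (k N : ℕ) : Set (ℕ × Finset ℕ × Multiset ℕ) := {x ∈ LL k N | ¬ Even x.2.1.card}
def RR (k N : ℕ) : Set (Finset ℕ × Multiset ℕ) :=
  {x | (∀ b ∈ x.1, 0 < b ∧ b < k) ∧ (∀ y ∈ x.2, 0 < y) ∧ (∑ b ∈ x.1, b) + x.2.sum = N}
def RRE (k N : ℕ) : Set (Finset ℕ × Multiset ℕ) := {x ∈ RR k N | Even x.1.card}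
def RRO (k N : ℕ) : Set (Finset ℕ × Multiset ℕ) := {x ∈ RR k N | ¬ Even x.1.card}

/-! ### finiteness -/

lemma finite_bounded_multisets (N : ℕ) :
    {π : Multiset ℕ | Multiset.card π ≤ N ∧ ∀ x ∈ π, x ≤ N}.Finite := by
  classical
  have key : Set.Finite ((fun (π : Multiset ℕ) => fun i : Fin (N+1) => Multiset.count i.1 π) ''
      {π : Multiset ℕ | Multiset.card π ≤ N ∧ ∀ x ∈ π, x ≤ N}) := by
    apply Set.Finite.subset (Set.Finite.pi (fun _ : Fin (N+1) => Set.finite_Iic N))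
    rintro g ⟨π, ⟨hc, _⟩, rfl⟩
    intro i _
    exact Set.mem_Iic.2 (le_trans (Multiset.count_le_card _ _) hc)
  apply Set.Finite.of_finite_image key
  rintro π₁ ⟨hc₁, hb₁⟩ π₂ ⟨hc₂, hb₂⟩ hEq
  ext a
  by_cases ha : a ≤ N
  · exact congrFun hEq ⟨a, by omega⟩
  · rw [Multiset.count_eq_zero.2 (fun hmem => ha (hb₁ a hmem)),
      Multiset.count_eq_zero.2 (fun hmem => ha (hb₂ a hmem))]

lemma finite_part (m : ℕ) : (Part m).Finite := by
  apply (finite_bounded_multisets m).subset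
  rintro π ⟨hpos, hsum⟩
  exact ⟨hsum ▸ card_le_sum π hpos,
    fun x hx => hsum ▸ Multiset.single_le_sum (fun _ _ => Nat.zero_le _) x hx⟩

lemma finite_part_le (m : ℕ) : {π : Multiset ℕ | (∀ y ∈ π, 0 < y) ∧ π.sum ≤ m}.Finite := by
  apply (finite_bounded_multisets m).subset
  rintro π ⟨hpos, hsum⟩
  exact ⟨le_trans (card_le_sum π hpos) hsum,
    fun x hx => le_trans (Multiset.single_le_sum (fun _ _ => Nat.zero_le _) x hx) hsum⟩

lemma finite_finsets (s : Finset ℕ) : {A : Finset ℕ | A ⊆ s}.Finite := by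
  apply Set.Finite.subset (s.powerset).finite_toSet
  intro A hA
  simpa [Finset.mem_powerset] using hA

lemma sum_mem_le (A : Finset ℕ) (a : ℕ) (ha : a ∈ A) : a ≤ ∑ b ∈ A, b := by
  exact Finset.single_le_sum (f := fun x => x) (fun i _ => Nat.zero_le i) ha

lemma finite_cfg (k n : ℕ) (hk : 0 < k) : (Cfg k n).Finite := by
  apply Set.Finite.subset (Set.Finite.prod (Set.finite_Iic n) (finite_finsets (Finset.Iic n)))
  rintro ⟨s, A⟩ ⟨hA, hsum⟩
  dsimp only at hA hsum
  constructor
  · have : k * s ≤ n := by omega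
    exact Set.mem_Iic.2 (le_trans (Nat.le_mul_of_pos_left s hk) this)
  · intro a ha
    exact Finset.mem_Iic.2 (by have := sum_mem_le A a ha; omega)

lemma finite_bst (k n : ℕ) : (Bst k n).Finite := by
  apply Set.Finite.subset (finite_finsets (Finset.Iic k))
  rintro B ⟨hB, -⟩
  intro b hb
  exact Finset.mem_Iic.2 (le_of_lt (hB b hb).2)

lemma finite_LL (k N : ℕ) (hk : 0 < k) : (LL k N).Finite := by
  apply Set.Finite.subset (Set.Finite.prod (Set.finite_Iic N)
    (Set.Finite.prod (finite_finsets (Finset.Iic N)) (finite_part_le N)))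
  rintro ⟨s, A, π⟩ ⟨hA, hπ, hsum⟩
  dsimp only at hA hπ hsum
  refine ⟨Set.mem_Iic.2 ?_, fun a ha => Finset.mem_Iic.2 ?_, hπ, show π.sum ≤ N by omega⟩
  · have : k * s ≤ N := by omega
    exact le_trans (Nat.le_mul_of_pos_left s hk) this
  · have := sum_mem_le A a ha; omega

lemma finite_RR (k N : ℕ) : (RR k N).Finite := by
  apply Set.Finite.subset (Set.Finite.prod (finite_finsets (Finset.Iic k)) (finite_part_le N))
  rintro ⟨B, ρ⟩ ⟨hB, hρ, hsum⟩
  dsimp only at hB hρ hsum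
  exact ⟨fun b hb => Finset.mem_Iic.2 (le_of_lt (hB b hb).2), hρ, show ρ.sum ≤ N by omega⟩

/-! ### ncard tools -/

lemma ncard_prod {α β : Type*} (s : Set α) (t : Set β) :
    (s ×ˢ t).ncard = s.ncard * t.ncard := by
  rw [← Nat.card_coe_set_eq, ← Nat.card_coe_set_eq, ← Nat.card_coe_set_eq,
    ← Nat.card_prod]
  exact Nat.card_congr (Equiv.Set.prod s t)

lemma ncard_inl_union_inr {α β : Type*} (S : Set α) (T : Set β)
    (hS : S.Finite) (hT : T.Finite) :
    ((Sum.inl '' S : Set (α ⊕ β)) ∪ Sum.inr '' T).ncard = S.ncard + T.ncard := by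
  rw [Set.ncard_union_eq ?_ (hS.image _) (hT.image _),
    Set.ncard_image_of_injective _ Sum.inl_injective,
    Set.ncard_image_of_injective _ Sum.inr_injective]
  rw [Set.disjoint_left]
  rintro x ⟨a, _, rfl⟩ ⟨b, _, hEq⟩
  exact absurd hEq (by simp)

lemma ncard_biUnion_range {α : Type*} (f : ℕ → Set α) (hf : ∀ i, (f i).Finite)
    (hd : ∀ i j, i ≠ j → Disjoint (f i) (f j)) :
    ∀ n, (⋃ i ∈ Finset.range n, f i).ncard = ∑ i ∈ Finset.range n, (f i).ncard := by
  intro n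
  induction n with
  | zero => simp
  | succ n ih =>
    rw [Finset.sum_range_succ, ← ih]
    have hU : (⋃ i ∈ Finset.range (n+1), f i) = (⋃ i ∈ Finset.range n, f i) ∪ f n := by
      rw [Finset.range_add_one]
      rw [show (insert n (Finset.range n)) = insert n (Finset.range n) from rfl]
      rw [Finset.set_biUnion_insert]
      rw [Set.union_comm]
    rw [hU]
    apply Set.ncard_union_eq
    · rw [Set.disjoint_left]
      rintro x hx hxn
      rcases Set.mem_iUnion₂.1 hx with ⟨i, hi, hxi⟩
      have : i ≠ n := by
        intro h; subst h; exact absurd hi (by simp)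
      exact Set.disjoint_left.1 (hd i n this) hxi hxn
    · exact Set.Finite.biUnion (Finset.finite_toSet _) (fun i _ => hf i)
    · exact hf n


/-! ### parity-refined sets (parametrized by a predicate on the cardinality) -/

def LLP (k N : ℕ) (P : ℕ → Prop) : Set (ℕ × Finset ℕ × Multiset ℕ) :=
  {x ∈ LL k N | P x.2.1.card}
def RRP (k N : ℕ) (P : ℕ → Prop) : Set (Finset ℕ × Multiset ℕ) :=
  {x ∈ RR k N | P x.1.card}
def CfgP (k n : ℕ) (P : ℕ → Prop) : Set (ℕ × Finset ℕ) := {c ∈ Cfg k n | P c.2.card}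
def BstP (k n : ℕ) (P : ℕ → Prop) : Set (Finset ℕ) := {B ∈ Bst k n | P B.card}

def SA (k N : ℕ) : Set Elt := {x | valid k x ∧ wt k x = N ∧ sgn x}
def SB (k N : ℕ) : Set Elt := {x | valid k x ∧ wt k x = N ∧ ¬ sgn x}

lemma master1 (k : ℕ) (hk : 0 < k) (N : ℕ) : (SA k N).ncard = (SB k N).ncard := by
  have hmapsA : Set.MapsTo (Th k) (SA k N) (SB k N) := by
    rintro x ⟨hv, hw, hs⟩
    obtain ⟨v', w', s', _⟩ := Th_spec k hk x hv
    exact ⟨v', by rw [w', hw], fun hcon => (s'.1 hcon) hs⟩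
  have hmapsB : Set.MapsTo (Th k) (SB k N) (SA k N) := by
    rintro x ⟨hv, hw, hs⟩
    obtain ⟨v', w', s', _⟩ := Th_spec k hk x hv
    exact ⟨v', by rw [w', hw], s'.2 hs⟩
  have hinv : Set.InvOn (Th k) (Th k) (SA k N) (SB k N) :=
    ⟨fun x hx => (Th_spec k hk x hx.1).2.2.2, fun x hx => (Th_spec k hk x hx.1).2.2.2⟩
  have hbij : Set.BijOn (Th k) (SA k N) (SB k N) := hinv.bijOn hmapsA hmapsB
  rw [← hbij.image_eq, Set.ncard_image_of_injOn hbij.injOn]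

lemma SA_eq (k N : ℕ) :
    SA k N = Sum.inl '' (LLP k N (fun c => Even c)) ∪ Sum.inr '' (RRP k N (fun c => ¬ Even c)) := by
  ext x
  rcases x with a | b
  · simp only [SA, Set.mem_setOf_eq, valid, wt, sgn, Set.mem_union, Set.mem_image,
      LLP, LL, RRP, RR]
    constructor
    · rintro ⟨⟨h1, h2⟩, h3, h4⟩
      exact Or.inl ⟨a, ⟨⟨h1, h2, h3⟩, h4⟩, rfl⟩
    · rintro (⟨y, ⟨⟨h1, h2, h3⟩, h4⟩, hEq⟩ | ⟨y, _, hEq⟩)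
      · cases hEq; exact ⟨⟨h1, h2⟩, h3, h4⟩
      · exact absurd hEq (by simp)
  · simp only [SA, Set.mem_setOf_eq, valid, wt, sgn, Set.mem_union, Set.mem_image,
      LLP, LL, RRP, RR]
    constructor
    · rintro ⟨⟨h1, h2⟩, h3, h4⟩
      exact Or.inr ⟨b, ⟨⟨h1, h2, h3⟩, h4⟩, rfl⟩
    · rintro (⟨y, _, hEq⟩ | ⟨y, ⟨⟨h1, h2, h3⟩, h4⟩, hEq⟩)
      · exact absurd hEq (by simp)
      · cases hEq; exact ⟨⟨h1, h2⟩, h3, h4⟩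

lemma SB_eq (k N : ℕ) :
    SB k N = Sum.inl '' (LLP k N (fun c => ¬ Even c)) ∪ Sum.inr '' (RRP k N (fun c => ¬ ¬ Even c)) := by
  ext x
  rcases x with a | b
  · simp only [SB, Set.mem_setOf_eq, valid, wt, sgn, Set.mem_union, Set.mem_image,
      LLP, LL, RRP, RR]
    constructor
    · rintro ⟨⟨h1, h2⟩, h3, h4⟩
      exact Or.inl ⟨a, ⟨⟨h1, h2, h3⟩, h4⟩, rfl⟩
    · rintro (⟨y, ⟨⟨h1, h2, h3⟩, h4⟩, hEq⟩ | ⟨y, _, hEq⟩)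
      · cases hEq; exact ⟨⟨h1, h2⟩, h3, h4⟩
      · exact absurd hEq (by simp)
  · simp only [SB, Set.mem_setOf_eq, valid, wt, sgn, Set.mem_union, Set.mem_image,
      LLP, LL, RRP, RR]
    constructor
    · rintro ⟨⟨h1, h2⟩, h3, h4⟩
      exact Or.inr ⟨b, ⟨⟨h1, h2, h3⟩, h4⟩, rfl⟩
    · rintro (⟨y, _, hEq⟩ | ⟨y, ⟨⟨h1, h2, h3⟩, h4⟩, hEq⟩)
      · exact absurd hEq (by simp)
      · cases hEq; exact ⟨⟨h1, h2⟩, h3, h4⟩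

/-! ### decomposition into convolutions -/

lemma L_decomp (k N : ℕ) (hk : 0 < k) (P : ℕ → Prop) :
    (LLP k N P).ncard = ∑ n ∈ Finset.range (N+1), (CfgP k n P).ncard * pp (N - n) := by
  classical
  set f : ℕ → Set (ℕ × Finset ℕ × Multiset ℕ) :=
    fun n => {x ∈ LLP k N P | k * x.1 + (∑ a ∈ x.2.1, a) = n} with hf
  have hLLPfin : (LLP k N P).Finite := (finite_LL k N hk).subset (fun x hx => hx.1)
  have hfin : ∀ i, (f i).Finite := fun i => hLLPfin.subset (fun x hx => hx.1)
  have hdisj : ∀ i j, i ≠ j → Disjoint (f i) (f j) := by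
    intro i j hij
    rw [Set.disjoint_left]
    rintro x ⟨-, hxi⟩ ⟨-, hxj⟩
    exact hij (hxi ▸ hxj ▸ rfl)
  have hcover : LLP k N P = ⋃ i ∈ Finset.range (N+1), f i := by
    ext x
    simp only [Set.mem_iUnion₂, hf, Set.mem_setOf_eq]
    constructor
    · intro hx
      refine ⟨k * x.1 + (∑ a ∈ x.2.1, a), ?_, hx, rfl⟩
      have := hx.1.2.2
      exact Finset.mem_range.2 (by omega)
    · rintro ⟨i, -, hx, -⟩
      exact hx
  rw [hcover, ncard_biUnion_range f hfin hdisj]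
  apply Finset.sum_congr rfl
  intro n hn
  have hnN : n ≤ N := by have := Finset.mem_range.1 hn; omega
  -- each slice is a product
  have hg : Set.InjOn (fun x : ℕ × Finset ℕ × Multiset ℕ => ((x.1, x.2.1), x.2.2)) (f n) := by
    rintro ⟨s₁, A₁, π₁⟩ - ⟨s₂, A₂, π₂⟩ - hEq
    simp only [Prod.mk.injEq] at hEq
    simp [hEq.1.1, hEq.1.2, hEq.2]
  have himg : (fun x : ℕ × Finset ℕ × Multiset ℕ => ((x.1, x.2.1), x.2.2)) '' (f n)
      = (CfgP k n P) ×ˢ (Part (N - n)) := by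
    ext ⟨⟨s, A⟩, π⟩
    simp only [Set.mem_image, Set.mem_prod, hf, Set.mem_setOf_eq, LLP, LL, CfgP, Cfg, Part]
    constructor
    · rintro ⟨⟨s', A', π'⟩, ⟨⟨⟨h1, h2, h3⟩, h4⟩, h5⟩, hEq⟩
      simp only [Prod.mk.injEq] at hEq
      obtain ⟨⟨rfl, rfl⟩, rfl⟩ := hEq
      try dsimp only at h1 h2 h3 h4 h5
      exact ⟨⟨⟨h1, h5⟩, h4⟩, h2, by omega⟩
    · rintro ⟨⟨⟨h1, h5⟩, h4⟩, h2, h3⟩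
      try dsimp only at h1 h2 h3 h4 h5
      exact ⟨(s, A, π), ⟨⟨⟨h1, h2, show k * s + (∑ a ∈ A, a) + π.sum = N by omega⟩, h4⟩,
        show k * s + (∑ a ∈ A, a) = n from h5⟩, rfl⟩
  rw [← Set.ncard_image_of_injOn hg, himg, ncard_prod]
  rfl

lemma R_decomp (k N : ℕ) (P : ℕ → Prop) :
    (RRP k N P).ncard = ∑ n ∈ Finset.range (N+1), (BstP k n P).ncard * pp (N - n) := by
  classical
  set f : ℕ → Set (Finset ℕ × Multiset ℕ) :=
    fun n => {x ∈ RRP k N P | (∑ b ∈ x.1, b) = n} with hf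
  have hRRPfin : (RRP k N P).Finite := (finite_RR k N).subset (fun x hx => hx.1)
  have hfin : ∀ i, (f i).Finite := fun i => hRRPfin.subset (fun x hx => hx.1)
  have hdisj : ∀ i j, i ≠ j → Disjoint (f i) (f j) := by
    intro i j hij
    rw [Set.disjoint_left]
    rintro x ⟨-, hxi⟩ ⟨-, hxj⟩
    exact hij (hxi ▸ hxj ▸ rfl)
  have hcover : RRP k N P = ⋃ i ∈ Finset.range (N+1), f i := by
    ext x
    simp only [Set.mem_iUnion₂, hf, Set.mem_setOf_eq]
    constructor
    · intro hx
      refine ⟨∑ b ∈ x.1, b, ?_, hx, rfl⟩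
      have := hx.1.2.2
      exact Finset.mem_range.2 (by omega)
    · rintro ⟨i, -, hx, -⟩
      exact hx
  rw [hcover, ncard_biUnion_range f hfin hdisj]
  apply Finset.sum_congr rfl
  intro n hn
  have hnN : n ≤ N := by have := Finset.mem_range.1 hn; omega
  have heq : f n = (BstP k n P) ×ˢ (Part (N - n)) := by
    ext ⟨B, ρ⟩
    simp only [Set.mem_prod, hf, Set.mem_setOf_eq, RRP, RR, BstP, Bst, Part]
    constructor
    · rintro ⟨⟨⟨h1, h2, h3⟩, h4⟩, h5⟩
      try dsimp only at h1 h2 h3 h4 h5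
      exact ⟨⟨⟨h1, h5⟩, h4⟩, h2, by omega⟩
    · rintro ⟨⟨⟨h1, h5⟩, h4⟩, h2, h3⟩
      try dsimp only at h1 h2 h3 h4 h5
      exact ⟨⟨⟨h1, h2, show (∑ b ∈ B, b) + ρ.sum = N by omega⟩, h4⟩,
        show (∑ b ∈ B, b) = n from h5⟩
  rw [heq, ncard_prod]
  rfl

lemma pp_zero : pp 0 = 1 := by
  have : Part 0 = {(0 : Multiset ℕ)} := by
    ext π
    simp only [Part, Set.mem_setOf_eq, Set.mem_singleton_iff]
    constructor
    · rintro ⟨hpos, hsum⟩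
      rw [Multiset.eq_zero_iff_forall_notMem]
      intro x hx
      have h1 := hpos x hx
      have h2 : x ≤ π.sum := Multiset.single_le_sum (fun _ _ => Nat.zero_le _) x hx
      omega
    · rintro rfl
      exact ⟨by simp, by simp⟩
  rw [pp, this, Set.ncard_singleton]

/-- the key identity, by strong induction -/
lemma key (k : ℕ) (hk : 0 < k) : ∀ N : ℕ,
    (CfgP k N (fun c => Even c)).ncard + (BstP k N (fun c => ¬ Even c)).ncard
      = (CfgP k N (fun c => ¬ Even c)).ncard + (BstP k N (fun c => ¬ ¬ Even c)).ncard := by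
  intro N
  induction N using Nat.strong_induction_on with
  | _ N IH =>
    have hmaster := master1 k hk N
    rw [SA_eq, SB_eq,
      ncard_inl_union_inr _ _
        ((finite_LL k N hk).subset (fun x hx => hx.1))
        ((finite_RR k N).subset (fun x hx => hx.1)),
      ncard_inl_union_inr _ _
        ((finite_LL k N hk).subset (fun x hx => hx.1))
        ((finite_RR k N).subset (fun x hx => hx.1)),
      L_decomp k N hk, R_decomp k N, L_decomp k N hk, R_decomp k N,
      ← Finset.sum_add_distrib, ← Finset.sum_add_distrib,
      Finset.sum_range_succ, Finset.sum_range_succ] at hmaster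
    have hIH : ∑ n ∈ Finset.range N,
        ((CfgP k n (fun c => Even c)).ncard * pp (N - n)
          + (BstP k n (fun c => ¬ Even c)).ncard * pp (N - n))
        = ∑ n ∈ Finset.range N,
        ((CfgP k n (fun c => ¬ Even c)).ncard * pp (N - n)
          + (BstP k n (fun c => ¬ ¬ Even c)).ncard * pp (N - n)) := by
      apply Finset.sum_congr rfl
      intro n hn
      have h1 := IH n (Finset.mem_range.1 hn)
      rw [← Nat.add_mul, ← Nat.add_mul, h1]
    rw [hIH] at hmaster
    have hcancel := Nat.add_left_cancel hmaster
    rw [Nat.sub_self, pp_zero, mul_one, mul_one, mul_one, mul_one] at hcancel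
    exact hcancel


/-! ### emptiness of Bst for large n -/

lemma bst_empty (k n : ℕ) (h : k * (k - 1) / 2 < n) : Bst k n = ∅ := by
  ext B
  simp only [Bst, Set.mem_setOf_eq, Set.mem_empty_iff_false, iff_false, not_and]
  intro hB hsum
  have hsub : B ⊆ Finset.Icc 1 (k-1) := by
    intro b hb
    have := hB b hb
    rw [Finset.mem_Icc]
    omega
  have h1 : (∑ b ∈ B, b) ≤ ∑ b ∈ Finset.Icc 1 (k-1), b :=
    Finset.sum_le_sum_of_subset hsub
  have h2 : (∑ b ∈ Finset.Icc 1 (k-1), b) = ∑ b ∈ Finset.range k, b := by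
    apply Finset.sum_subset
    · intro b hb
      rw [Finset.mem_Icc] at hb
      rw [Finset.mem_range]
      omega
    · intro b hb hnb
      rw [Finset.mem_range] at hb
      rw [Finset.mem_Icc] at hnb
      omega
  have h3 := Finset.sum_range_id_mul_two k
  omega

/-! ### the bijection between configurations and multisets -/

/-- the multiset attached to a configuration -/
def toM (k : ℕ) (c : ℕ × Finset ℕ) : Multiset ℕ := Multiset.replicate k c.1 + c.2.val

lemma fsum_val (A : Finset ℕ) : (∑ a ∈ A, a) = A.val.sum := by
  rw [Finset.sum]
  rw [Multiset.map_id']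

/-- the sets of multisets in the theorem statement, with parity predicate -/
def MSet (k n : ℕ) (P : ℕ → Prop) : Set (Multiset ℕ) :=
  {M | M.sum = n ∧ ∃ s ∈ M, (∀ x ∈ M, s ≤ x) ∧ M.count s = k ∧
      (∀ x ∈ M, x ≠ s → M.count x = 1) ∧ P (M.filter (fun x => s < x)).card}

lemma toM_spec (k : ℕ) (hk : 0 < k) (s : ℕ) (A : Finset ℕ) (hA : ∀ a ∈ A, s < a) :
    (toM k (s, A)).sum = k * s + (∑ a ∈ A, a)
    ∧ s ∈ toM k (s, A)
    ∧ (∀ x ∈ toM k (s, A), s ≤ x)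
    ∧ (toM k (s, A)).count s = k
    ∧ (∀ x ∈ toM k (s, A), x ≠ s → (toM k (s, A)).count x = 1)
    ∧ (toM k (s, A)).filter (fun x => s < x) = A.val := by
  classical
  have hsA : s ∉ A := fun hc => absurd (hA s hc) (lt_irrefl s)
  have hfilter : (toM k (s, A)).filter (fun x => s < x) = A.val := by
    rw [toM, Multiset.filter_add]
    have h1 : (Multiset.replicate k s).filter (fun x => s < x) = 0 := by
      rw [Multiset.filter_eq_nil]
      intro x hx
      rw [Multiset.eq_of_mem_replicate hx]
      omega
    have h2 : A.val.filter (fun x => s < x) = A.val :=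
      Multiset.filter_eq_self.2 (fun a ha => hA a ha)
    rw [h1, h2, zero_add]
  refine ⟨?_, ?_, ?_, ?_, ?_, hfilter⟩
  · rw [toM, Multiset.sum_add, Multiset.sum_replicate, smul_eq_mul, fsum_val]
  · rw [toM, Multiset.mem_add]
    exact Or.inl (Multiset.mem_replicate.2 ⟨by omega, rfl⟩)
  · intro x hx
    rcases Multiset.mem_add.1 hx with h | h
    · rw [Multiset.eq_of_mem_replicate h]
    · exact le_of_lt (hA x h)
  · rw [toM, Multiset.count_add, Multiset.count_replicate_self,
      Multiset.count_eq_zero_of_notMem (by simpa using hsA)]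
    omega
  · intro x hx hxs
    rw [toM, Multiset.count_add]
    have h1 : Multiset.count x (Multiset.replicate k s) = 0 :=
      Multiset.count_eq_zero_of_notMem (fun hc => hxs (Multiset.eq_of_mem_replicate hc))
    have h2 : x ∈ A.val := by
      rcases Multiset.mem_add.1 hx with h | h
      · exact absurd (Multiset.eq_of_mem_replicate h) hxs
      · exact h
    rw [h1, Multiset.count_eq_one_of_mem A.nodup h2, zero_add]

lemma bijOn_toM (k : ℕ) (hk : 0 < k) (n : ℕ) (P : ℕ → Prop) :
    Set.BijOn (toM k) (CfgP k n P) (MSet k n P) := by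
  classical
  refine ⟨?_, ?_, ?_⟩
  · -- maps to
    rintro ⟨s, A⟩ ⟨⟨hA, hsum⟩, hP⟩
    dsimp only at hA hsum hP
    obtain ⟨h1, h2, h3, h4, h5, h6⟩ := toM_spec k hk s A hA
    refine ⟨by omega, s, h2, h3, h4, h5, ?_⟩
    rw [h6]
    exact hP
  · -- inj on
    rintro ⟨s₁, A₁⟩ ⟨⟨hA₁, -⟩, -⟩ ⟨s₂, A₂⟩ ⟨⟨hA₂, -⟩, -⟩ hEq
    dsimp only at hA₁ hA₂
    obtain ⟨-, h2a, h3a, -, -, -⟩ := toM_spec k hk s₁ A₁ hA₁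
    obtain ⟨-, h2b, h3b, -, -, -⟩ := toM_spec k hk s₂ A₂ hA₂
    have hs : s₁ = s₂ := by
      have ha := h3b s₁ (hEq ▸ h2a)
      have hb := h3a s₂ (hEq.symm ▸ h2b)
      omega
    subst hs
    have hAv : A₁.val = A₂.val := by
      have : Multiset.replicate k s₁ + A₁.val = Multiset.replicate k s₁ + A₂.val := hEq
      exact add_left_cancel this
    rw [Prod.mk.injEq]
    exact ⟨rfl, Finset.val_inj.1 hAv⟩
  · -- surj on
    rintro M ⟨hsum, s, hsM, hmin, hcount, hone, hP⟩
    have hnodup : (M.filter (fun x => x ≠ s)).Nodup := by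
      rw [Multiset.nodup_iff_count_le_one]
      intro a
      rw [Multiset.count_filter]
      split_ifs with ha
      · by_cases haM : a ∈ M
        · rw [hone a haM ha]
        · rw [Multiset.count_eq_zero_of_notMem haM]
          omega
      · omega
    set A : Finset ℕ := ⟨M.filter (fun x => x ≠ s), hnodup⟩ with hA_def
    have hmemA : ∀ a, a ∈ A ↔ (a ∈ M ∧ a ≠ s) := by
      intro a
      rw [hA_def]
      constructor
      · intro ha
        have := Multiset.mem_filter.1 ha
        exact this
      · intro ha
        exact Multiset.mem_filter.2 ha
    have hAgt : ∀ a ∈ A, s < a := by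
      intro a ha
      obtain ⟨haM, hane⟩ := (hmemA a).1 ha
      have := hmin a haM
      omega
    have hAval : A.val = M.filter (fun x => x ≠ s) := rfl
    have hM_eq : toM k (s, A) = M := by
      rw [Multiset.ext]
      intro a
      show Multiset.count a (Multiset.replicate k s + A.val) = Multiset.count a M
      rw [Multiset.count_add, hAval, Multiset.count_filter]
      by_cases ha : a = s
      · subst ha
        rw [Multiset.count_replicate_self]
        simp only [ne_eq, not_true_eq_false, if_false]
        omega
      · rw [Multiset.count_eq_zero_of_notMem
          (fun hc => ha (Multiset.eq_of_mem_replicate hc))]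
        simp only [ne_eq, ha, not_false_eq_true, if_true]
        omega
    have hfilters : M.filter (fun x => x ≠ s) = M.filter (fun x => s < x) := by
      apply Multiset.filter_congr
      intro x hx
      have := hmin x hx
      constructor
      · intro h; omega
      · intro h; omega
    refine ⟨(s, A), ⟨⟨hAgt, ?_⟩, ?_⟩, hM_eq⟩
    · show k * s + (∑ a ∈ A, a) = n
      obtain ⟨h1, -, -, -, -, -⟩ := toM_spec k hk s A hAgt
      rw [← h1, hM_eq, hsum]
    · show P A.card
      have : A.card = Multiset.card (M.filter (fun x => s < x)) := by
        rw [Finset.card_def, hAval, hfilters]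
      rw [this]
      exact hP

lemma mset_ncard (k : ℕ) (hk : 0 < k) (n : ℕ) (P : ℕ → Prop) :
    (MSet k n P).ncard = (CfgP k n P).ncard := by
  have hbij := bijOn_toM k hk n P
  rw [← hbij.image_eq, Set.ncard_image_of_injOn hbij.injOn]

lemma mset_finite (k : ℕ) (hk : 0 < k) (n : ℕ) (P : ℕ → Prop) : (MSet k n P).Finite := by
  rw [← (bijOn_toM k hk n P).image_eq]
  exact (((finite_cfg k n hk).subset (fun c hc => hc.1)).image _)

/-- the parity-free set of the theorem -/
def DSet (k n : ℕ) : Set (Multiset ℕ) :=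
  {M | M.sum = n ∧ ∃ s ∈ M, (∀ x ∈ M, s ≤ x) ∧ M.count s = k ∧
      ∀ x ∈ M, x ≠ s → M.count x = 1}

lemma dset_eq (k n : ℕ) :
    DSet k n = MSet k n (fun c => Even c) ∪ MSet k n (fun c => ¬ Even c) := by
  ext M
  constructor
  · rintro ⟨hsum, s, hsM, hmin, hcount, hone⟩
    by_cases hpar : Even (Multiset.card (M.filter (fun x => s < x)))
    · exact Or.inl ⟨hsum, s, hsM, hmin, hcount, hone, hpar⟩
    · exact Or.inr ⟨hsum, s, hsM, hmin, hcount, hone, hpar⟩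
  · rintro (⟨hsum, s, hsM, hmin, hcount, hone, -⟩ | ⟨hsum, s, hsM, hmin, hcount, hone, -⟩) <;>
      exact ⟨hsum, s, hsM, hmin, hcount, hone⟩

lemma dset_disjoint (k n : ℕ) :
    Disjoint (MSet k n (fun c => Even c)) (MSet k n (fun c => ¬ Even c)) := by
  rw [Set.disjoint_left]
  rintro M ⟨-, s₁, hs₁, hmin₁, -, -, hP₁⟩ ⟨-, s₂, hs₂, hmin₂, -, -, hP₂⟩
  have : s₁ = s₂ := le_antisymm (hmin₁ s₂ hs₂) (hmin₂ s₁ hs₁)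
  subst this
  exact hP₂ hP₁


/-- `MSet` is invariant under pointwise-equivalent parity predicates. -/
lemma mset_congr (k n : ℕ) (P Q : ℕ → Prop) (h : ∀ c, P c ↔ Q c) :
    MSet k n P = MSet k n Q := by
  ext M
  constructor <;> rintro ⟨hsum, s, hsM, hmin, hcount, hone, hP⟩ <;>
    exact ⟨hsum, s, hsM, hmin, hcount, hone, by first | exact (h _).1 hP | exact (h _).2 hP⟩

end DkProof

/-- For every `n > k(k-1)/2`, the partitions counted by `D_k(n)` with an even
number of parts exceeding the smallest part are equinumerous with those with an
odd number of such parts; consequently `D_k(n)` is even. -/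
theorem D_even_eq_odd (k : ℕ) (hk : 0 < k) :
    ∀ n : ℕ, k * (k - 1) / 2 < n →
      DcountE k n = DcountO k n ∧ Even (Dcount k n) := by
  intro n hn
  have hBempty : DkProof.Bst k n = ∅ := DkProof.bst_empty k n hn
  have hsub : ∀ P : ℕ → Prop, DkProof.BstP k n P = ∅ := by
    intro P
    apply Set.eq_empty_of_subset_empty
    intro B hB'
    rw [← hBempty]
    exact hB'.1
  have hkey := DkProof.key k hk n
  rw [hsub, hsub, Set.ncard_empty] at hkey
  have hEO : (DkProof.MSet k n (fun c => Even c)).ncard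
      = (DkProof.MSet k n (fun c => ¬ Even c)).ncard := by
    rw [DkProof.mset_ncard k hk, DkProof.mset_ncard k hk]
    omega
  have hE : DcountE k n = (DkProof.MSet k n (fun c => Even c)).ncard := rfl
  have hO : DcountO k n = (DkProof.MSet k n (fun c => ¬ Even c)).ncard := by
    have h1 : DcountO k n = (DkProof.MSet k n (fun c => Odd c)).ncard := rfl
    rw [h1, DkProof.mset_congr k n (fun c => Odd c) (fun c => ¬ Even c)
      (fun c => Nat.not_even_iff_odd.symm)]
  have hD : Dcount k n = (DkProof.MSet k n (fun c => Even c)).ncard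
      + (DkProof.MSet k n (fun c => ¬ Even c)).ncard := by
    have h1 : Dcount k n = (DkProof.DSet k n).ncard := rfl
    rw [h1, DkProof.dset_eq, Set.ncard_union_eq (DkProof.dset_disjoint k n)
      (DkProof.mset_finite k hk n _) (DkProof.mset_finite k hk n _)]
  refine ⟨by rw [hE, hO, hEO], ?_⟩
  rw [hD, ← hEO]
  exact ⟨(DkProof.MSet k n (fun c => Even c)).ncard, rfl⟩
end

section
/- For every integer n with 1 ≤ n ≤ k-1 and n of the pentagonal form n = m(3m±1)/2 for some positive integer m, we have D_k^e(n) - D_k^o(n) = (-1)^m; and for 1 ≤ n ≤ k-1 not of this form, D_k^e(n) = D_k^o(n). -/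
open Finset PowerSeries Nat.Partition
open scoped PowerSeries.WithPiTopology

theorem Finset.sum_neg_one_pow_eq_card_sub_card {α R : Type*} [CommRing R] (s : Finset α)
    (f : α → ℕ) :
    ∑ x ∈ s, (-1 : R) ^ f x = #{x ∈ s | Even (f x)} - #{x ∈ s | Odd (f x)} := by
  rw [← sum_filter_add_sum_filter_not s (fun x ↦ Even (f x))]
  simp only [Nat.not_even_iff_odd]
  have heven : ∀ x ∈ {x ∈ s | Even (f x)}, (-1 : R) ^ f x = 1 :=
    fun x hx ↦ (mem_filter.1 hx).2.neg_one_pow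
  have hodd : ∀ x ∈ {x ∈ s | Odd (f x)}, (-1 : R) ^ f x = -1 :=
    fun x hx ↦ (mem_filter.1 hx).2.neg_one_pow
  rw [sum_congr rfl heven, sum_congr rfl hodd]
  simp [sub_eq_add_neg]

namespace Multiset

theorem eq_zero_of_count_eq_of_sum_lt {M : Multiset ℕ} {s k : ℕ} (hs : M.count s = k)
    (hM : M.sum < k) : s = 0 := by
  have hle : k * s ≤ M.sum := by
    rw [← filter_add_not (· = s) M, sum_add, filter_eq', sum_replicate, hs, smul_eq_mul]
    exact Nat.le_add_right _ _
  by_contra hs0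
  have := Nat.le_mul_of_pos_right k (Nat.pos_of_ne_zero hs0)
  omega

theorem replicate_count_zero_add_filter_pos (M : Multiset ℕ) :
    replicate (M.count 0) 0 + M.filter (0 < ·) = M := by
  simpa only [← filter_eq', Nat.pos_iff_ne_zero] using filter_add_not (· = 0) M

end Multiset

namespace Nat.Partition

theorem filter_pos_replicate_zero_add {n : ℕ} (p : n.Partition) (k : ℕ) :
    (Multiset.replicate k 0 + p.parts).filter (0 < ·) = p.parts := by
  rw [Multiset.filter_add,
    Multiset.filter_eq_nil.2 (fun x hx ↦ by simp [Multiset.eq_of_mem_replicate hx]),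
    Multiset.filter_eq_self.2 (fun _ ↦ p.parts_pos), zero_add]

theorem count_zero_replicate_zero_add {n : ℕ} (p : n.Partition) (k : ℕ) :
    (Multiset.replicate k 0 + p.parts).count 0 = k := by
  rw [Multiset.count_add, Multiset.count_replicate_self,
    Multiset.count_eq_zero.2 (fun h ↦ (p.parts_pos h).ne rfl), add_zero]

theorem ncard_setOf_smallest_part_eq_card_distincts {k n : ℕ} (hnk : n < k) (P : ℕ → Prop)
    [DecidablePred P] :
    {M : Multiset ℕ | M.sum = n ∧
      ∃ s ∈ M, (∀ x ∈ M, s ≤ x) ∧ M.count s = k ∧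
        (∀ x ∈ M, x ≠ s → M.count x = 1) ∧ P (M.filter (fun x => s < x)).card}.ncard =
      #{p ∈ distincts n | P p.parts.card} := by
  have hinj : Function.Injective fun p : n.Partition ↦ Multiset.replicate k 0 + p.parts :=
    fun p q h ↦ Nat.Partition.ext (add_left_cancel h)
  rw [← Set.ncard_coe_finset, ← Set.ncard_image_of_injective _ hinj]
  congr 1
  ext M
  simp only [Set.mem_ofPred_eq, Set.mem_image, mem_coe, mem_filter, distincts, mem_univ,
    true_and]
  constructor
  · rintro ⟨hsum, s, -, -, hcount, hsimple, hP⟩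
    obtain rfl : s = 0 := Multiset.eq_zero_of_count_eq_of_sum_lt hcount (hsum ▸ hnk)
    refine ⟨⟨M.filter (0 < ·), fun hx ↦ Multiset.of_mem_filter hx, ?_⟩, ⟨?_, hP⟩, ?_⟩
    · conv_rhs => rw [← hsum, ← M.replicate_count_zero_add_filter_pos]
      simp
    · refine Multiset.nodup_iff_count_le_one.2 fun x ↦ ?_
      rw [Multiset.count_filter]
      split_ifs with hx
      · by_cases hxM : x ∈ M
        · exact (hsimple x hxM hx.ne').le
        · simp [Multiset.count_eq_zero.2 hxM]
      · exact zero_le_one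
    · simpa only [hcount] using M.replicate_count_zero_add_filter_pos
  · rintro ⟨p, ⟨hnodup, hP⟩, rfl⟩
    refine ⟨by simp [p.parts_sum], 0, ?_, fun x _ ↦ x.zero_le,
      p.count_zero_replicate_zero_add k, ?_, ?_⟩
    · exact Multiset.mem_add.2 (Or.inl (Multiset.mem_replicate.2 ⟨by omega, rfl⟩))
    · intro x hx hx0
      rw [Multiset.count_add, Multiset.count_replicate, if_neg (Ne.symm hx0), zero_add]
      exact Multiset.count_eq_one_of_mem hnodup ((Multiset.mem_add.1 hx).resolve_left
        (fun h ↦ hx0 (Multiset.eq_of_mem_replicate h)))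
    · rwa [p.filter_pos_replicate_zero_add]

variable {R : Type*} [CommRing R]

theorem parts_toFinsupp_prod_ite_count_eq_one {n : ℕ} (p : n.Partition) :
    p.parts.toFinsupp.prod (fun _ c ↦ if c = 1 then (-1 : R) else 0) =
      if p.parts.Nodup then (-1) ^ p.parts.card else 0 := by
  rw [Finsupp.prod, prod_ite_zero, prod_const, Multiset.toFinsupp_support]
  simp only [Multiset.toFinsupp_apply, Multiset.mem_toFinset, ← Multiset.nodup_iff_count_eq_one]
  split_ifs with h
  · rw [Multiset.toFinset_card_of_nodup h]
  · rfl

theorem hasProd_one_sub_X_pow_powerSeriesMk_sum_distincts [TopologicalSpace R] [T2Space R] :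
    HasProd (fun i ↦ (1 - X ^ (i + 1) : R⟦X⟧))
      (PowerSeries.mk fun n ↦ ∑ p ∈ distincts n, (-1 : R) ^ p.parts.card) := by
  convert! hasProd_genFun (fun _ c ↦ if c = 1 then (-1 : R) else 0) using 1
  · ext1 i
    rw [tsum_eq_single 0 (fun j hj ↦ by simp [hj])]
    simp [sub_eq_add_neg]
  · ext n
    simp only [coeff_mk, coeff_genFun, parts_toFinsupp_prod_ite_count_eq_one, distincts,
      sum_filter]

theorem sum_distincts_neg_one_pow_card_eq_coeff_pentagonalSeries (n : ℕ) :
    ∑ p ∈ distincts n, (-1 : R) ^ p.parts.card = (pentagonalSeries R).coeff n := by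
  -- Any Hausdorff topology lets us compare the two infinite products; take the discrete one.
  let _ : TopologicalSpace R := ⊥
  have _ : DiscreteTopology R := ⟨rfl⟩
  rw [← coeff_mk n (fun n ↦ ∑ p ∈ distincts n, (-1 : R) ^ p.parts.card),
    hasProd_one_sub_X_pow_powerSeriesMk_sum_distincts.unique
      (WithPiTopology.hasProd_one_sub_X_pow R)]

end Nat.Partition

theorem pentagonal_neg_natCast_of_two_mul_eq {n m : ℕ} (h : 2 * n = m * (3 * m + 1)) :
    pentagonal (-m) = n := by
  have := two_mul_natCast_pentagonal_neg m
  zify at h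
  linarith

theorem pentagonal_natCast_of_two_mul_eq {n m : ℕ} (hm : 0 < m) (h : 2 * n = m * (3 * m - 1)) :
    pentagonal m = n := by
  have := two_mul_natCast_pentagonal m
  zify [show 1 ≤ 3 * m by omega] at h
  linarith

theorem exists_two_mul_eq_of_pentagonal_eq {n : ℕ} {j : ℤ} (hn : n ≠ 0)
    (h : pentagonal j = n) :
    ∃ m : ℕ, 0 < m ∧ (2 * n = m * (3 * m + 1) ∨ 2 * n = m * (3 * m - 1)) := by
  have h2 := two_mul_natCast_pentagonal j
  rw [h] at h2
  rcases j with m | m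
  · have hm : 0 < m := Nat.pos_of_ne_zero fun hm ↦ hn (by subst hm; simpa using h2)
    refine ⟨m, hm, Or.inr ?_⟩
    zify [show 1 ≤ 3 * m by omega]
    simpa using h2
  · refine ⟨m + 1, m.succ_pos, Or.inl ?_⟩
    zify
    rw [Int.negSucc_eq] at h2
    linarith

namespace PowerSeries

variable {R : Type*} [CommRing R]

theorem coeff_pentagonalSeries_of_two_mul_eq {n m : ℕ} (hm : 0 < m)
    (h : 2 * n = m * (3 * m + 1) ∨ 2 * n = m * (3 * m - 1)) :
    (pentagonalSeries R).coeff n = (-1) ^ m := by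
  rcases h with h | h
  · rw [← pentagonal_neg_natCast_of_two_mul_eq h, coeff_pentagonalSeries_pentagonal,
      Int.coe_negOnePow]
    simp
  · rw [← pentagonal_natCast_of_two_mul_eq hm h, coeff_pentagonalSeries_pentagonal,
      Int.coe_negOnePow, Int.natAbs_natCast]

theorem coeff_pentagonalSeries_eq_zero_of_not_exists {n : ℕ} (hn : n ≠ 0)
    (h : ¬∃ m : ℕ, 0 < m ∧ (2 * n = m * (3 * m + 1) ∨ 2 * n = m * (3 * m - 1))) :
    (pentagonalSeries R).coeff n = 0 :=
  coeff_pentagonalSeries_eq_zero R fun ⟨_, hj⟩ ↦ h (exists_two_mul_eq_of_pentagonal_eq hn hj)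

end PowerSeries

/-- For `1 ≤ n ≤ k-1`: if `n = m(3m±1)/2` for a positive integer `m`, then
`D_k^e(n) - D_k^o(n) = (-1)^m`; otherwise `D_k^e(n) = D_k^o(n)`. -/
theorem D_diff_pentagonal (k n : ℕ) (h1 : 1 ≤ n) (h2 : n ≤ k - 1) :
    (∀ m : ℕ, 0 < m → (2 * n = m * (3 * m + 1) ∨ 2 * n = m * (3 * m - 1)) →
      (DcountE k n : ℤ) - DcountO k n = (-1 : ℤ) ^ m) ∧
    ((¬ ∃ m : ℕ, 0 < m ∧ (2 * n = m * (3 * m + 1) ∨ 2 * n = m * (3 * m - 1))) →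
      DcountE k n = DcountO k n) := by
  have hnk : n < k := by omega
  have hdiff : (DcountE k n : ℤ) - DcountO k n = (pentagonalSeries ℤ).coeff n := by
    rw [DcountE, DcountO, ncard_setOf_smallest_part_eq_card_distincts hnk,
      ncard_setOf_smallest_part_eq_card_distincts hnk, ← sum_neg_one_pow_eq_card_sub_card,
      sum_distincts_neg_one_pow_card_eq_coeff_pentagonalSeries]
  refine ⟨fun m hm h ↦ ?_, fun h ↦ ?_⟩
  · rw [hdiff, coeff_pentagonalSeries_of_two_mul_eq hm h]
  · have hzero := coeff_pentagonalSeries_eq_zero_of_not_exists (R := ℤ) (by omega) h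
    omega
end
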